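/- arXiv:2205.07392 — 6 statements merged into one kernel-verified Lean document; each statement's English description precedes it below -/
import Mathlib

section
/- If F is a k-antichain saturated family of subsets of [n], then F is the union of k − 1 full chains, i.e., there exist chains D₁, …, D_{k−1} of subsets of [n], each of size n + 1, with F = D₁ ∪ ⋯ ∪ D_{k−1}. -/
open Finset

/-- A family `F` of finite subsets of ℕ contains a `k`-antichain: there are `k` sets in `F`
that are pairwise incomparable under inclusion. -/
def ContainsAntichain (k : ℕ) (F : Finset (Finset ℕ)) : Prop :=
  ∃ S ⊆ F, S.card = k ∧ ∀ A ∈ S, ∀ B ∈ S, A ≠ B → ¬ A ⊆ B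

/-- `F` is a `k`-antichain saturated family of subsets of `[n] = {1, …, n}`:
all members are subsets of `[n]`, `F` contains no `k`-antichain, but adding any new
subset of `[n]` creates a `k`-antichain. -/
def IsAntichainSaturated (n k : ℕ) (F : Finset (Finset ℕ)) : Prop :=
  (∀ A ∈ F, A ⊆ Finset.Icc 1 n) ∧
  ¬ ContainsAntichain k F ∧
  ∀ X ⊆ Finset.Icc 1 n, X ∉ F → ContainsAntichain k (insert X F)

/-- A chain of subsets of `[n]`: a family of subsets of `[n]` totally ordered by inclusion. -/
def IsChainOfSubsets (n : ℕ) (D : Finset (Finset ℕ)) : Prop :=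
  (∀ A ∈ D, A ⊆ Finset.Icc 1 n) ∧ ∀ A ∈ D, ∀ B ∈ D, A ⊆ B ∨ B ⊆ A

/-- A full chain of subsets of `[n]`: a chain of size `n + 1`. -/
def IsFullChain (n : ℕ) (D : Finset (Finset ℕ)) : Prop :=
  IsChainOfSubsets n D ∧ D.card = n + 1

/-!
By Dilworth's theorem a family without `k`-antichains is covered by `k - 1` chains; extend each
of them to a maximal chain `E` inside `F`. A set `X ⊆ [n]` comparable with every member of `E`
lies in `F`: otherwise saturation yields `k - 1` pairwise incomparable members of `F`, all
incomparable with `X`, and as each of the `k - 1` chains contains at most one of them, `E`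
contains one. Hence `E` is a maximal chain of the whole power set of `[n]`, i.e. a full chain.
-/

section Dilworth

variable {α : Type*} [PartialOrder α]

def WidthLE (P : Finset α) (m : ℕ) : Prop :=
  ∀ S ⊆ P, IsAntichain (· ≤ ·) (S : Set α) → S.card ≤ m

theorem WidthLE.mono {P Q : Finset α} {m : ℕ} (hP : WidthLE P m) (hQP : Q ⊆ P) : WidthLE Q m :=
  fun S hSQ hS => hP S (hSQ.trans hQP) hS

theorem IsChain.exists_greatest {s : Finset α} (hs : IsChain (· ≤ ·) (s : Set α))
    (hne : s.Nonempty) : ∃ x ∈ s, ∀ y ∈ s, y ≤ x := by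
  obtain ⟨x, hx⟩ := exists_maximal hne
  refine ⟨x, hx.1, fun y hy => ?_⟩
  rcases hs.total (mem_coe.2 hx.1) (mem_coe.2 hy) with hxy | hyx
  exacts [hx.2 hy hxy, hyx]

theorem IsChain.exists_maximal_chain_superset {P C : Finset α}
    (hC : IsChain (· ≤ ·) (C : Set α)) (hCP : C ⊆ P) :
    ∃ E, C ⊆ E ∧ Maximal (fun E : Finset α => E ⊆ P ∧ IsChain (· ≤ ·) (E : Set α)) E :=
  (P.powerset.finite_toSet.subset fun _ hE => mem_powerset.2 hE.1).exists_le_maximal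
    (s := {E : Finset α | E ⊆ P ∧ IsChain (· ≤ ·) (E : Set α)}) ⟨hCP, hC⟩

variable [DecidableEq α]

/-- `D` partitions `P` into `m` chains, some of which may be empty. -/
def IsChainPartition {m : ℕ} (P : Finset α) (D : Fin m → Finset α) : Prop :=
  (∀ i, IsChain (· ≤ ·) (D i : Set α)) ∧ (Pairwise fun i j => Disjoint (D i) (D j)) ∧
    univ.biUnion D = P

theorem IsAntichain.inter_nonempty_of_subset_biUnion_chains {m : ℕ} {D : Fin m → Finset α}
    (hD : ∀ i, IsChain (· ≤ ·) (D i : Set α)) {S : Finset α}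
    (hS : IsAntichain (· ≤ ·) (S : Set α)) (hSD : S ⊆ univ.biUnion D) (hm : m ≤ S.card)
    (i : Fin m) : (S ∩ D i).Nonempty := by
  by_contra h
  have hcover : S ⊆ (univ.erase i).biUnion fun j => S ∩ D j := by
    intro x hx
    obtain ⟨j, -, hxj⟩ := mem_biUnion.mp (hSD hx)
    have hji : j ≠ i := by
      rintro rfl
      exact h ⟨x, mem_inter.mpr ⟨hx, hxj⟩⟩
    exact mem_biUnion.mpr ⟨j, mem_erase.mpr ⟨hji, mem_univ j⟩, mem_inter.mpr ⟨hx, hxj⟩⟩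
  have hle : ∀ j ∈ univ.erase i, (S ∩ D j).card ≤ 1 := fun j _ => card_le_one.mpr
    fun x hx y hy => inter_subsingleton_of_isAntichain_of_isChain hS (hD j)
      (by simpa using hx) (by simpa using hy)
  have := (card_le_card hcover).trans (card_biUnion_le_card_mul _ _ 1 hle)
  simp only [mem_univ, card_erase_of_mem, card_univ, Fintype.card_fin, mul_one] at this
  have := i.pos
  omega

theorem IsChainPartition.cons {m : ℕ} {P K : Finset α} {D : Fin m → Finset α}
    (hD : IsChainPartition (P \ K) D) (hK : IsChain (· ≤ ·) (K : Set α)) (hKP : K ⊆ P) :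
    IsChainPartition P (Fin.cons K D : Fin (m + 1) → Finset α) := by
  obtain ⟨hchain, hdisj, hcover⟩ := hD
  have hDK : ∀ j, Disjoint K (D j) := fun j =>
    disjoint_of_subset_right (hcover ▸ subset_biUnion_of_mem D (mem_univ j)) disjoint_sdiff
  refine ⟨Fin.cases hK hchain, ?_, ?_⟩
  · intro i j hij
    cases i using Fin.cases <;> cases j using Fin.cases
    · exact absurd rfl hij
    · exact hDK _
    · exact (hDK _).symm
    · exact hdisj (fun h => hij (congrArg Fin.succ h))
  · rw [← sdiff_union_of_subset hKP, ← hcover, union_comm]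
    ext x
    simp [Fin.exists_fin_succ]

theorem IsChainPartition.exists_greatest_on_antichains {m : ℕ} {Q : Finset α}
    {D : Fin m → Finset α} (hD : IsChainPartition Q D)
    (hQ : ∃ S ⊆ Q, IsAntichain (· ≤ ·) (S : Set α) ∧ S.card = m) :
    ∃ x : Fin m → α, (∀ i, x i ∈ D i) ∧ (∀ i j, x i ≤ x j → i = j) ∧
      ∀ S ⊆ Q, IsAntichain (· ≤ ·) (S : Set α) → S.card = m → ∀ i, ∀ y ∈ S ∩ D i, y ≤ x i := by
  classical
  obtain ⟨hchain, hdisj, hcover⟩ := hD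
  let InMaxAntichain (y : α) : Prop :=
    ∃ S ⊆ Q, IsAntichain (· ≤ ·) (S : Set α) ∧ S.card = m ∧ y ∈ S
  have hmeet : ∀ S ⊆ Q, IsAntichain (· ≤ ·) (S : Set α) → S.card = m → ∀ i, (S ∩ D i).Nonempty :=
    fun S hSQ hS hSm => hS.inter_nonempty_of_subset_biUnion_chains hchain (hcover ▸ hSQ) hSm.ge
  have hmem : ∀ S ⊆ Q, IsAntichain (· ≤ ·) (S : Set α) → S.card = m → ∀ i, ∀ y ∈ S ∩ D i,
      y ∈ (D i).filter InMaxAntichain := fun S hSQ hS hSm i y hy =>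
    mem_filter.2 ⟨(mem_inter.1 hy).2, S, hSQ, hS, hSm, (mem_inter.1 hy).1⟩
  have hx : ∀ i, ∃ x ∈ (D i).filter InMaxAntichain, ∀ y ∈ (D i).filter InMaxAntichain, y ≤ x := by
    intro i
    obtain ⟨S, hSQ, hS, hSm⟩ := hQ
    obtain ⟨y, hy⟩ := hmeet S hSQ hS hSm i
    exact ((hchain i).mono (coe_subset.2 (filter_subset _ _))).exists_greatest
      ⟨y, hmem S hSQ hS hSm i y hy⟩
  choose x hxD hxtop using hx
  refine ⟨x, fun i => (mem_filter.1 (hxD i)).1, fun i j hij => ?_,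
    fun S hSQ hS hSm i y hy => hxtop i y (hmem S hSQ hS hSm i y hy)⟩
  -- `x j` lies in a maximum antichain, which meets `D i` in some `y ≤ x i ≤ x j`; so `y = x j`.
  obtain ⟨hxj, S, hSQ, hS, hSm, hxjS⟩ := mem_filter.1 (hxD j)
  obtain ⟨y, hy⟩ := hmeet S hSQ hS hSm i
  have hyx : y = x j :=
    hS.eq (mem_inter.1 hy).1 hxjS ((hxtop i y (hmem S hSQ hS hSm i y hy)).trans hij)
  by_contra hne
  exact disjoint_left.1 (hdisj hne) (hyx ▸ (mem_inter.1 hy).2) hxj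

/-- Galvin's inductive step for Dilworth's theorem. -/
theorem exists_chain_meeting_maximum_antichains {m : ℕ} {P : Finset α}
    (hP : WidthLE P (m + 1)) {a : α} (ha : Maximal (· ∈ P) a) {D : Fin (m + 1) → Finset α}
    (hD : IsChainPartition (P.erase a) D) :
    ∃ K ⊆ P, a ∈ K ∧ IsChain (· ≤ ·) (K : Set α) ∧ WidthLE (P \ K) m := by
  classical
  by_cases hsmall : WidthLE (P.erase a) m
  · refine ⟨{a}, singleton_subset_iff.2 ha.1, mem_singleton_self a, by simp, ?_⟩
    rwa [sdiff_singleton_eq_erase]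
  have hmax : ∃ S ⊆ P.erase a, IsAntichain (· ≤ ·) (S : Set α) ∧ S.card = m + 1 := by
    simp only [WidthLE, not_forall, not_le] at hsmall
    obtain ⟨S, hSP, hS, hSm⟩ := hsmall
    obtain ⟨T, hTS, hT⟩ := exists_subset_card_eq hSm
    exact ⟨T, hTS.trans hSP, hS.subset (coe_subset.2 hTS), hT⟩
  obtain ⟨x, hxD, hxinj, hxtop⟩ := hD.exists_greatest_on_antichains hmax
  have hxP : ∀ i, x i ∈ P.erase a := fun i => hD.2.2 ▸ mem_biUnion.2 ⟨i, mem_univ i, hxD i⟩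
  by_cases hxa : ∃ i, x i ≤ a
  · obtain ⟨i, hia⟩ := hxa
    have hDP : D i ⊆ P.erase a := hD.2.2 ▸ subset_biUnion_of_mem D (mem_univ i)
    refine ⟨insert a ((D i).filter (· ≤ x i)), ?_, mem_insert_self _ _, ?_, ?_⟩
    · exact insert_subset ha.1 ((filter_subset _ _).trans (hDP.trans (erase_subset a P)))
    · rw [coe_insert]
      exact ((hD.1 i).mono (coe_subset.2 (filter_subset _ _))).insert fun b hb _ =>
        Or.inr ((mem_filter.1 hb).2.trans hia)
    · intro S hSK hS
      by_contra! hSm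
      obtain ⟨T, hTS, hT⟩ := exists_subset_card_eq hSm
      have hTK := hTS.trans hSK
      have hTP : T ⊆ P.erase a := fun y hy =>
        mem_erase.2 ⟨fun h => (mem_sdiff.1 (hTK hy)).2 (h ▸ mem_insert_self _ _),
          (mem_sdiff.1 (hTK hy)).1⟩
      have hT' : IsAntichain (· ≤ ·) (T : Set α) := hS.subset (coe_subset.2 hTS)
      obtain ⟨y, hy⟩ := hT'.inter_nonempty_of_subset_biUnion_chains hD.1 (hD.2.2 ▸ hTP) hT.ge i
      exact (mem_sdiff.1 (hTK (mem_inter.1 hy).1)).2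
        (mem_insert_of_mem (mem_filter.2 ⟨(mem_inter.1 hy).2, hxtop T hTP hT' hT i y hy⟩))
  · -- otherwise `a` together with all the `x i` would form an antichain of size `m + 2`
    simp only [not_exists] at hxa
    have hanti : IsAntichain (· ≤ ·) ((insert a (univ.image x) : Finset α) : Set α) := by
      rw [coe_insert, coe_image, coe_univ, Set.image_univ]
      refine IsAntichain.insert ?_ ?_ ?_
      · rintro - ⟨i, rfl⟩ - ⟨j, rfl⟩ hne hij
        exact hne (congrArg x (hxinj i j hij))
      · rintro - ⟨i, rfl⟩ -
        exact hxa i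
      · rintro - ⟨i, rfl⟩ - hai
        exact hxa i (ha.2 (erase_subset a P (hxP i)) hai)
    have hcard : (insert a (univ.image x)).card = m + 2 := by
      rw [card_insert_of_notMem, card_image_of_injective _ fun i j h => hxinj i j h.le,
        card_univ, Fintype.card_fin]
      simp only [mem_image, mem_univ, true_and, not_exists]
      exact fun i h => (mem_erase.1 (hxP i)).1 h
    have := hP _ (insert_subset ha.1 (image_subset_iff.2 fun i _ => erase_subset a P (hxP i))) hanti
    omega

theorem WidthLE.exists_isChainPartition {P : Finset α} {m : ℕ} (hP : WidthLE P m) :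
    ∃ D : Fin m → Finset α, IsChainPartition P D := by
  induction P using Finset.strongInduction generalizing m with
  | H P ih =>
  rcases P.eq_empty_or_nonempty with rfl | hne
  · exact ⟨fun _ => ∅, fun _ => by simp, fun _ _ _ => disjoint_empty_left _, by ext; simp⟩
  obtain ⟨a, ha⟩ := exists_maximal hne
  have hm : 1 ≤ m := by simpa using hP {a} (singleton_subset_iff.2 ha.1) (by simp)
  obtain ⟨m, rfl⟩ := Nat.exists_eq_add_one.2 hm
  obtain ⟨D, hD⟩ := ih _ (erase_ssubset ha.1) (hP.mono (erase_subset a P))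
  obtain ⟨K, hKP, haK, hK, hPK⟩ := exists_chain_meeting_maximum_antichains hP ha hD
  obtain ⟨D', hD'⟩ := ih _ (sdiff_ssubset hKP ⟨a, haK⟩) hPK
  exact ⟨Fin.cons K D', hD'.cons hK hKP⟩

end Dilworth

section ChainsOfSubsets

variable {α : Type*} {E : Finset (Finset α)}

theorem IsChain.subset_of_card_le (hE : IsChain (· ⊆ ·) (E : Set (Finset α))) {A B : Finset α}
    (hA : A ∈ E) (hB : B ∈ E) (hAB : A.card ≤ B.card) : A ⊆ B := by
  rcases hE.total (mem_coe.2 hA) (mem_coe.2 hB) with h | h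
  exacts [h, (eq_of_subset_of_card_le h hAB).ge]

variable [DecidableEq α]

theorem IsChain.exists_mem_card_eq_of_forall_comparable_mem {U : Finset α}
    (hE : IsChain (· ⊆ ·) (E : Set (Finset α))) (hEU : ∀ A ∈ E, A ⊆ U)
    (hmax : ∀ X ⊆ U, (∀ C ∈ E, C ⊆ X ∨ X ⊆ C) → X ∈ E) {s : ℕ} (hs : s ≤ U.card) :
    ∃ A ∈ E, A.card = s := by
  induction s with
  | zero => exact ⟨∅, hmax ∅ (empty_subset U) fun C _ => Or.inr (empty_subset C), card_empty⟩
  | succ s ih =>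
    obtain ⟨A, hA, rfl⟩ := ih (by omega)
    have hU : U ∈ E := hmax U Subset.rfl fun C hC => Or.inl (hEU C hC)
    have hAU : A ⊂ U := ssubset_of_subset_of_ne (hEU A hA) (by rintro rfl; omega)
    -- `B` is the successor of `A` in `E`; a set squeezed in between is comparable with all of `E`
    obtain ⟨B, hB, hBmin⟩ := exists_min_image (E.filter (A ⊂ ·)) card ⟨U, mem_filter.2 ⟨hU, hAU⟩⟩
    obtain ⟨hBE, hAB⟩ := mem_filter.1 hB
    obtain ⟨x, hxB, hxA⟩ := exists_of_ssubset hAB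
    have hxAB : insert x A ⊆ B := insert_subset hxB hAB.subset
    refine ⟨insert x A, hmax _ (hxAB.trans (hEU B hBE)) fun C hC => ?_, card_insert_of_notMem hxA⟩
    rcases hE.total (mem_coe.2 hC) (mem_coe.2 hA) with hCA | hAC
    · exact Or.inl (hCA.trans (subset_insert x A))
    obtain rfl | hAC := eq_or_ssubset_of_subset hAC
    · exact Or.inl (subset_insert x A)
    exact Or.inr (hxAB.trans (hE.subset_of_card_le hBE hC (hBmin C (mem_filter.2 ⟨hC, hAC⟩))))

theorem IsChain.card_eq_of_forall_comparable_mem {U : Finset α}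
    (hE : IsChain (· ⊆ ·) (E : Set (Finset α))) (hEU : ∀ A ∈ E, A ⊆ U)
    (hmax : ∀ X ⊆ U, (∀ C ∈ E, C ⊆ X ∨ X ⊆ C) → X ∈ E) : E.card = U.card + 1 := by
  have hinj : Set.InjOn card (E : Set (Finset α)) := fun A hA B hB h =>
    (hE.subset_of_card_le hA hB h.le).antisymm (hE.subset_of_card_le hB hA h.ge)
  rw [← card_image_of_injOn hinj, ← card_range (U.card + 1)]
  congr 1
  ext s
  simp only [mem_image, mem_range, Nat.lt_succ_iff]
  constructor
  · rintro ⟨A, hA, rfl⟩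
    exact card_le_card (hEU A hA)
  · exact hE.exists_mem_card_eq_of_forall_comparable_mem hEU hmax

end ChainsOfSubsets

namespace IsAntichainSaturated

variable {n k : ℕ} {F : Finset (Finset ℕ)}

theorem widthLE (hF : IsAntichainSaturated n k F) : WidthLE F (k - 1) := by
  intro S hSF hS
  by_contra! h
  obtain ⟨T, hTS, hT⟩ := exists_subset_card_eq (show k ≤ S.card by omega)
  exact hF.2.1 ⟨T, hTS.trans hSF, hT, fun A hA B hB => hS.subset (coe_subset.2 hTS) hA hB⟩

theorem exists_antichain_incomparable (hF : IsAntichainSaturated n k F) {X : Finset ℕ}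
    (hX : X ⊆ Icc 1 n) (hXF : X ∉ F) :
    ∃ T ⊆ F, T.card = k - 1 ∧ IsAntichain (· ⊆ ·) (T : Set (Finset ℕ)) ∧
      ∀ C ∈ T, ¬ C ⊆ X ∧ ¬ X ⊆ C := by
  obtain ⟨S, hSF, hSk, hS⟩ := hF.2.2 X hX hXF
  have hXS : X ∈ S := by
    by_contra hXS
    exact hF.2.1 ⟨S, fun C hC => (mem_insert.1 (hSF hC)).resolve_left (ne_of_mem_of_not_mem hC hXS),
      hSk, hS⟩
  refine ⟨S.erase X, fun C hC => ?_, by rw [card_erase_of_mem hXS, hSk], fun A hA B hB =>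
    hS A (mem_of_mem_erase hA) B (mem_of_mem_erase hB), fun C hC => ?_⟩
  · exact (mem_insert.1 (hSF (mem_of_mem_erase hC))).resolve_left (ne_of_mem_erase hC)
  · exact ⟨hS C (mem_of_mem_erase hC) X hXS (ne_of_mem_erase hC),
      hS X hXS C (mem_of_mem_erase hC) (ne_of_mem_erase hC).symm⟩

theorem mem_of_forall_comparable (hF : IsAntichainSaturated n k F)
    {D : Fin (k - 1) → Finset (Finset ℕ)} (hD : ∀ i, IsChain (· ⊆ ·) (D i : Set (Finset ℕ)))
    (hFD : F ⊆ univ.biUnion D) (i : Fin (k - 1)) {X : Finset ℕ} (hX : X ⊆ Icc 1 n)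
    (hcomp : ∀ C ∈ D i, C ⊆ X ∨ X ⊆ C) : X ∈ F := by
  by_contra hXF
  obtain ⟨T, hTF, hTk, hT, hTX⟩ := hF.exists_antichain_incomparable hX hXF
  obtain ⟨C, hC⟩ := hT.inter_nonempty_of_subset_biUnion_chains hD (hTF.trans hFD) hTk.ge i
  rcases hcomp C (mem_inter.1 hC).2 with h | h
  exacts [(hTX C (mem_inter.1 hC).1).1 h, (hTX C (mem_inter.1 hC).1).2 h]

theorem isFullChain_of_maximal (hF : IsAntichainSaturated n k F)
    {D : Fin (k - 1) → Finset (Finset ℕ)} (hD : ∀ i, IsChain (· ⊆ ·) (D i : Set (Finset ℕ)))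
    (hFD : F ⊆ univ.biUnion D) {i : Fin (k - 1)} {E : Finset (Finset ℕ)} (hDE : D i ⊆ E)
    (hE : Maximal (fun E : Finset (Finset ℕ) => E ⊆ F ∧ IsChain (· ⊆ ·) (E : Set (Finset ℕ))) E) :
    IsFullChain n E := by
  obtain ⟨⟨hEF, hE⟩, hmax⟩ := hE
  have hEU : ∀ A ∈ E, A ⊆ Icc 1 n := fun A hA => hF.1 A (hEF hA)
  refine ⟨⟨hEU, fun A hA B hB => hE.total (mem_coe.2 hA) (mem_coe.2 hB)⟩, ?_⟩
  convert hE.card_eq_of_forall_comparable_mem hEU fun X hX hcomp => ?_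
  · simp
  have hXF := hF.mem_of_forall_comparable hD hFD i hX fun C hC => hcomp C (hDE hC)
  have hchain : IsChain (· ⊆ ·) (insert X E : Set (Finset ℕ)) :=
    hE.insert fun C hC _ => (hcomp C hC).symm
  exact hmax (y := insert X E) ⟨insert_subset hXF hEF, by rwa [coe_insert]⟩ (subset_insert X E)
    (mem_insert_self X E)

end IsAntichainSaturated

theorem saturated_is_union_of_full_chains_general (n k : ℕ)
    (F : Finset (Finset ℕ)) (hF : IsAntichainSaturated n k F) :
    ∃ D : Fin (k - 1) → Finset (Finset ℕ),
      (∀ i, IsFullChain n (D i)) ∧ F = Finset.univ.biUnion D := by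
  obtain ⟨D, hD, -, hDF⟩ := hF.widthLE.exists_isChainPartition
  choose E hDE hE using fun i =>
    (hD i).exists_maximal_chain_superset (hDF ▸ subset_biUnion_of_mem D (mem_univ i))
  refine ⟨E, fun i => hF.isFullChain_of_maximal hD hDF.ge (hDE i) (hE i), ?_⟩
  exact (hDF.symm.trans_subset (biUnion_mono fun i _ => hDE i)).antisymm
    (biUnion_subset.2 fun i _ => (hE i).1.1)

/-- If `F` is a `k`-antichain saturated family of subsets of `[n]`, then `F` is the union
of `k - 1` full chains. -/
theorem saturated_is_union_of_full_chains (n k : ℕ) (hk : 2 ≤ k)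
    (F : Finset (Finset ℕ)) (hF : IsAntichainSaturated n k F) :
    ∃ D : Fin (k - 1) → Finset (Finset ℕ),
      (∀ i, IsFullChain n (D i)) ∧ F = Finset.univ.biUnion D :=
  saturated_is_union_of_full_chains_general n k F hF
end

section
/- Let n ≥ k ≥ 2 and let D₁, …, D_{k−1} be full chains of subsets of [n] such that for all i ≠ j, D_i ∩ D_j = {∅, [n]}. Then the family F = D₁ ∪ ⋯ ∪ D_{k−1} is k-antichain saturated. -/
open Finset

/-- A full chain of subsets of `[n]` contains a set of every size `m ≤ n`. -/
lemma fullChain_exists_card {n : ℕ} {D : Finset (Finset ℕ)} (h : IsFullChain n D)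
    {m : ℕ} (hm : m ≤ n) : ∃ A ∈ D, A.card = m := by
  obtain ⟨⟨hsub, hchain⟩, hcard⟩ := h
  have hIcc : (Finset.Icc 1 n).card = n := by simp
  have hinj : Set.InjOn Finset.card (D : Set (Finset ℕ)) := by
    intro A hA B hB hAB
    rcases hchain A hA B hB with h' | h'
    · exact Finset.eq_of_subset_of_card_le h' hAB.ge
    · exact (Finset.eq_of_subset_of_card_le h' hAB.le).symm
  have himg : D.image Finset.card = Finset.range (n + 1) := by
    apply Finset.eq_of_subset_of_card_le
    · intro x hx
      obtain ⟨A, hA, rfl⟩ := Finset.mem_image.mp hx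
      have := Finset.card_le_card (hsub A hA)
      rw [hIcc] at this
      exact Finset.mem_range.mpr (Nat.lt_succ_of_le this)
    · rw [Finset.card_image_of_injOn hinj, hcard, Finset.card_range]
  have : m ∈ D.image Finset.card := by
    rw [himg]; exact Finset.mem_range.mpr (Nat.lt_succ_of_le hm)
  obtain ⟨A, hA, hAc⟩ := Finset.mem_image.mp this
  exact ⟨A, hA, hAc⟩

/-- If `n ≥ k ≥ 2` and `D₁, …, D_{k-1}` are full chains of subsets of `[n]` pairwise
intersecting exactly in `{∅, [n]}`, then their union is `k`-antichain saturated. -/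
theorem union_of_disjoint_full_chains_saturated (n k : ℕ) (hk : 2 ≤ k) (hn : k ≤ n)
    (D : Fin (k - 1) → Finset (Finset ℕ)) (hfull : ∀ i, IsFullChain n (D i))
    (hinter : ∀ i j, i ≠ j → D i ∩ D j = ({∅, Finset.Icc 1 n} : Finset (Finset ℕ))) :
    IsAntichainSaturated n k (Finset.univ.biUnion D) := by
  have hIcc : (Finset.Icc 1 n).card = n := by simp
  refine ⟨?_, ?_, ?_⟩
  · -- every member is a subset of [n]
    intro A hA
    obtain ⟨i, _, hAi⟩ := Finset.mem_biUnion.mp hA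
    exact (hfull i).1.1 A hAi
  · -- no k-antichain
    rintro ⟨S, hSF, hScard, hS⟩
    have hmaps : ∀ A : Finset ℕ, ∃ i : Fin (k - 1), A ∈ S → A ∈ D i := by
      intro A
      by_cases hA : A ∈ S
      · obtain ⟨i, _, hAi⟩ := Finset.mem_biUnion.mp (hSF hA)
        exact ⟨i, fun _ => hAi⟩
      · exact ⟨⟨0, by omega⟩, fun h => absurd h hA⟩
    choose f hf using hmaps
    have hcardlt : (Finset.univ : Finset (Fin (k - 1))).card < S.card := by
      rw [hScard, Finset.card_univ, Fintype.card_fin]; omega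
    obtain ⟨A, hA, B, hB, hAB, hfAB⟩ :=
      Finset.exists_ne_map_eq_of_card_lt_of_maps_to hcardlt
        (fun A _ => Finset.mem_univ (f A))
    have hAD : A ∈ D (f A) := hf A hA
    have hBD : B ∈ D (f A) := hfAB ▸ hf B hB
    rcases (hfull (f A)).1.2 A hAD B hBD with h' | h'
    · exact hS A hA B hB hAB h'
    · exact hS B hB A hA hAB.symm h'
  · -- saturation
    intro X hX hXF
    set m := X.card with hm
    have hmn : m ≤ n := by
      have := Finset.card_le_card hX; rwa [hIcc] at this
    have i0 : Fin (k - 1) := ⟨0, by omega⟩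
    have hm0 : m ≠ 0 := by
      intro h0
      have hXe : X = ∅ := Finset.card_eq_zero.mp (by rw [← hm]; exact h0)
      obtain ⟨A, hA, hAc⟩ := fullChain_exists_card (hfull i0) (Nat.zero_le n)
      have : A = ∅ := Finset.card_eq_zero.mp hAc
      exact hXF (Finset.mem_biUnion.mpr ⟨i0, Finset.mem_univ _, by rw [hXe, ← this]; exact hA⟩)
    have hmn' : m ≠ n := by
      intro hmn2
      have hXe : X = Finset.Icc 1 n :=
        Finset.eq_of_subset_of_card_le hX (by rw [hIcc, ← hm, hmn2])
      obtain ⟨A, hA, hAc⟩ := fullChain_exists_card (hfull i0) (le_refl n)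
      have : A = Finset.Icc 1 n :=
        Finset.eq_of_subset_of_card_le ((hfull i0).1.1 A hA) (by rw [hIcc, hAc])
      exact hXF (Finset.mem_biUnion.mpr ⟨i0, Finset.mem_univ _, by rw [hXe, ← this]; exact hA⟩)
    have hAex : ∀ i : Fin (k - 1), ∃ A ∈ D i, A.card = m :=
      fun i => fullChain_exists_card (hfull i) hmn
    choose A hAmem hAcard using hAex
    have hAinj : Function.Injective A := by
      intro i j hij
      by_contra hne
      have : A i ∈ D i ∩ D j := Finset.mem_inter.mpr ⟨hAmem i, hij ▸ hAmem j⟩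
      rw [hinter i j hne] at this
      rcases Finset.mem_insert.mp this with h' | h'
      · exact hm0 (by rw [← hAcard i, h', Finset.card_empty])
      · exact hmn' (by rw [← hAcard i, Finset.mem_singleton.mp h', hIcc])
    set S : Finset (Finset ℕ) := insert X (Finset.univ.image A) with hSdef
    have hXnotin : X ∉ Finset.univ.image A := by
      intro h
      obtain ⟨i, _, hXi⟩ := Finset.mem_image.mp h
      exact hXF (Finset.mem_biUnion.mpr ⟨i, Finset.mem_univ _, hXi ▸ hAmem i⟩)
    have hScards : ∀ B ∈ S, B.card = m := by
      intro B hB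
      rcases Finset.mem_insert.mp hB with h' | h'
      · rw [h', ← hm]
      · obtain ⟨i, _, rfl⟩ := Finset.mem_image.mp h'
        exact hAcard i
    refine ⟨S, ?_, ?_, ?_⟩
    · intro B hB
      rcases Finset.mem_insert.mp hB with h' | h'
      · rw [h']; exact Finset.mem_insert_self X _
      · obtain ⟨i, _, rfl⟩ := Finset.mem_image.mp h'
        exact Finset.mem_insert_of_mem
          (Finset.mem_biUnion.mpr ⟨i, Finset.mem_univ _, hAmem i⟩)
    · rw [hSdef, Finset.card_insert_of_notMem hXnotin,
        Finset.card_image_of_injective _ hAinj, Finset.card_univ, Fintype.card_fin]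
      omega
    · intro B hB C hC hBC hsub
      apply hBC
      exact Finset.eq_of_subset_of_card_le hsub
        (by rw [hScards B hB, hScards C hC])
end

section
/- For all integers n ≥ k ≥ 2, sat*(n, A_k) ≤ (k − 1)(n − 1) + 2. -/
open Finset

def cyc (n i ℓ : ℕ) : Finset ℕ := (Finset.range ℓ).image (fun t => (i + t) % n + 1)

lemma mem_cyc {n i ℓ x : ℕ} : x ∈ cyc n i ℓ ↔ ∃ t < ℓ, (i + t) % n + 1 = x := by
  simp [cyc]

lemma cyc_subset_Icc {n i ℓ : ℕ} (hn : 0 < n) : cyc n i ℓ ⊆ Finset.Icc 1 n := by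
  intro x hx
  rw [mem_cyc] at hx
  obtain ⟨t, _, rfl⟩ := hx
  have := Nat.mod_lt (i + t) hn
  simp only [Finset.mem_Icc]; omega

lemma cyc_mono {n i ℓ ℓ' : ℕ} (h : ℓ ≤ ℓ') : cyc n i ℓ ⊆ cyc n i ℓ' :=
  Finset.image_subset_image (Finset.range_subset_range.2 h)

lemma card_cyc {n i ℓ : ℕ} (h : ℓ ≤ n) : (cyc n i ℓ).card = ℓ := by
  rw [cyc, Finset.card_image_of_injOn, Finset.card_range]
  intro t ht t' ht' he
  simp only [Finset.coe_range, Set.mem_Iio] at ht ht'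
  have h1 : (i + t) % n = (i + t') % n := by simpa using he
  have h2 : t % n = t' % n := Nat.ModEq.add_left_cancel' i h1
  rw [Nat.mod_eq_of_lt (by omega), Nat.mod_eq_of_lt (by omega)] at h2
  exact h2

lemma cyc_ne {n i j ℓ : ℕ} (hi : i < n) (hj : j < n) (hℓ1 : 1 ≤ ℓ) (hℓn : ℓ < n)
    (hij : i ≠ j) : cyc n i ℓ ≠ cyc n j ℓ := by
  intro he
  have hmem : i + 1 ∈ cyc n j ℓ := by
    rw [← he, mem_cyc]
    exact ⟨0, hℓ1, by simp [Nat.mod_eq_of_lt hi]⟩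
  rw [mem_cyc] at hmem
  obtain ⟨t, ht, hti⟩ := hmem
  have hti' : (j + t) % n = i := by omega
  have hpred : (i + (n - 1)) % n + 1 ∉ cyc n i ℓ := by
    rw [mem_cyc]
    rintro ⟨s, hs, hseq⟩
    have h1 : (i + s) % n = (i + (n - 1)) % n := by omega
    have h2 : s % n = (n - 1) % n := Nat.ModEq.add_left_cancel' i h1
    rw [Nat.mod_eq_of_lt (by omega), Nat.mod_eq_of_lt (by omega)] at h2
    omega
  rcases Nat.eq_zero_or_pos t with rfl | htpos
  · rw [Nat.add_zero, Nat.mod_eq_of_lt hj] at hti'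
    exact hij hti'.symm
  · apply hpred
    rw [he, mem_cyc]
    refine ⟨t - 1, by omega, ?_⟩
    have e1 : (i + (n - 1)) % n = (j + (t - 1)) % n := by
      rw [← hti', Nat.mod_add_mod]
      have e2 : j + t + (n - 1) = (j + (t - 1)) + n := by omega
      rw [e2, Nat.add_mod_right]
    omega

def satFam (n k : ℕ) : Finset (Finset ℕ) :=
  insert ∅ (insert (Finset.Icc 1 n)
    (((Finset.range (k - 1)) ×ˢ (Finset.Icc 1 (n - 1))).image (fun p => cyc n p.1 p.2)))

lemma satFam_card (n k : ℕ) : (satFam n k).card ≤ (k - 1) * (n - 1) + 2 := by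
  unfold satFam
  calc _ ≤ (insert (Finset.Icc 1 n)
        (((Finset.range (k - 1)) ×ˢ (Finset.Icc 1 (n - 1))).image (fun p => cyc n p.1 p.2))).card + 1 :=
          Finset.card_insert_le _ _
    _ ≤ (((Finset.range (k - 1)) ×ˢ (Finset.Icc 1 (n - 1))).image (fun p => cyc n p.1 p.2)).card + 1 + 1 := by
          have := Finset.card_insert_le (Finset.Icc 1 n)
            (((Finset.range (k - 1)) ×ˢ (Finset.Icc 1 (n - 1))).image (fun p => cyc n p.1 p.2))
          omega
    _ ≤ ((Finset.range (k - 1)) ×ˢ (Finset.Icc 1 (n - 1))).card + 2 := by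
          have := Finset.card_image_le (s := (Finset.range (k - 1)) ×ˢ (Finset.Icc 1 (n - 1)))
            (f := fun p : ℕ × ℕ => cyc n p.1 p.2)
          omega
    _ ≤ (k - 1) * (n - 1) + 2 := by
          rw [Finset.card_product, Finset.card_range, Nat.card_Icc]
          simp

lemma mem_satFam {n k : ℕ} {X : Finset ℕ} :
    X ∈ satFam n k ↔ X = ∅ ∨ X = Finset.Icc 1 n ∨
      ∃ i < k - 1, ∃ ℓ, 1 ≤ ℓ ∧ ℓ ≤ n - 1 ∧ X = cyc n i ℓ := by
  simp only [satFam, Finset.mem_insert, Finset.mem_image, Finset.mem_product,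
    Finset.mem_range, Finset.mem_Icc, Prod.exists]
  constructor
  · rintro (h | h | ⟨i, ℓ, ⟨hi, h1, h2⟩, rfl⟩)
    · exact Or.inl h
    · exact Or.inr (Or.inl h)
    · exact Or.inr (Or.inr ⟨i, hi, ℓ, h1, h2, rfl⟩)
  · rintro (h | h | ⟨i, hi, ℓ, h1, h2, rfl⟩)
    · exact Or.inl h
    · exact Or.inr (Or.inl h)
    · exact Or.inr (Or.inr ⟨i, ℓ, ⟨hi, h1, h2⟩, rfl⟩)

lemma satFam_saturated (n k : ℕ) (hk : 2 ≤ k) (hn : k ≤ n) :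
    IsAntichainSaturated n k (satFam n k) := by
  have hn0 : 0 < n := by omega
  refine ⟨?_, ?_, ?_⟩
  · -- all subsets of Icc 1 n
    intro A hA
    rw [mem_satFam] at hA
    rcases hA with rfl | rfl | ⟨i, _, ℓ, _, _, rfl⟩
    · exact Finset.empty_subset _
    · exact Finset.Subset.refl _
    · exact cyc_subset_Icc hn0
  · -- no k-antichain
    rintro ⟨S, hSF, hcard, hanti⟩
    -- S has at least two elements
    have h2 : 1 < S.card := by omega
    have hempty : ∅ ∉ S := by
      intro h
      obtain ⟨B, hB, hBne⟩ := Finset.exists_mem_ne h2 ∅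
      exact hanti ∅ h B hB hBne.symm (Finset.empty_subset B)
    have hfull : Finset.Icc 1 n ∉ S := by
      intro h
      obtain ⟨B, hB, hBne⟩ := Finset.exists_mem_ne h2 (Finset.Icc 1 n)
      have : B ⊆ Finset.Icc 1 n := by
        have := hSF hB
        rw [mem_satFam] at this
        rcases this with rfl | rfl | ⟨i, _, ℓ, _, _, rfl⟩
        · exact Finset.empty_subset _
        · exact Finset.Subset.refl _
        · exact cyc_subset_Icc hn0
      exact hanti B hB (Finset.Icc 1 n) h hBne this
    -- every element of S is some cyc
    have hcyc : ∀ s ∈ S, ∃ i < k - 1, ∃ ℓ, 1 ≤ ℓ ∧ ℓ ≤ n - 1 ∧ s = cyc n i ℓ := by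
      intro s hs
      have := hSF hs
      rw [mem_satFam] at this
      rcases this with rfl | rfl | h
      · exact absurd hs hempty
      · exact absurd hs hfull
      · exact h
    -- pigeonhole on the first index
    classical
    set f : Finset ℕ → ℕ := fun s =>
      if h : ∃ i < k - 1, ∃ ℓ, 1 ≤ ℓ ∧ ℓ ≤ n - 1 ∧ s = cyc n i ℓ then h.choose else 0 with hf
    have hfspec : ∀ s ∈ S, f s < k - 1 ∧ ∃ ℓ, 1 ≤ ℓ ∧ ℓ ≤ n - 1 ∧ s = cyc n (f s) ℓ := by
      intro s hs
      have h := hcyc s hs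
      simp only [hf, dif_pos h]
      exact ⟨h.choose_spec.1, h.choose_spec.2⟩
    have hmaps : ∀ s ∈ S, f s ∈ Finset.range (k - 1) := by
      intro s hs; rw [Finset.mem_range]; exact (hfspec s hs).1
    have hlt : (Finset.range (k - 1)).card < S.card := by
      rw [Finset.card_range]; omega
    obtain ⟨x, hx, y, hy, hxy, hfxy⟩ :=
      Finset.exists_ne_map_eq_of_card_lt_of_maps_to hlt hmaps
    obtain ⟨ℓx, _, _, hxe⟩ := (hfspec x hx).2
    obtain ⟨ℓy, _, _, hye⟩ := (hfspec y hy).2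
    rw [hfxy] at hxe
    rcases le_total ℓx ℓy with h | h
    · have hsub := cyc_mono (n := n) (i := f y) h
      rw [← hxe, ← hye] at hsub
      exact hanti x hx y hy hxy hsub
    · have hsub := cyc_mono (n := n) (i := f y) h
      rw [← hxe, ← hye] at hsub
      exact hanti y hy x hx hxy.symm hsub
  · -- saturation
    intro X hX hXF
    have hXne : X ≠ ∅ := by
      intro h; apply hXF; rw [mem_satFam]; exact Or.inl h
    have hXnf : X ≠ Finset.Icc 1 n := by
      intro h; apply hXF; rw [mem_satFam]; exact Or.inr (Or.inl h)
    set ℓ := X.card with hℓ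
    have hℓ1 : 1 ≤ ℓ := Finset.card_pos.2 (Finset.nonempty_iff_ne_empty.2 hXne)
    have hIcc : (Finset.Icc 1 n).card = n := by rw [Nat.card_Icc]; omega
    have hℓle : ℓ ≤ n := by rw [← hIcc]; exact Finset.card_le_card hX
    have hℓlt : ℓ < n := by
      rcases lt_or_eq_of_le hℓle with h | h
      · exact h
      · exact absurd (Finset.eq_of_subset_of_card_le hX (by omega)) hXnf
    refine ⟨insert X ((Finset.range (k - 1)).image (fun i => cyc n i ℓ)), ?_, ?_, ?_⟩
    · -- subset of insert X (satFam n k)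
      intro s hs
      rw [Finset.mem_insert] at hs ⊢
      rcases hs with rfl | hs
      · exact Or.inl rfl
      · right
        rw [Finset.mem_image] at hs
        obtain ⟨i, hi, rfl⟩ := hs
        rw [Finset.mem_range] at hi
        rw [mem_satFam]
        exact Or.inr (Or.inr ⟨i, hi, ℓ, hℓ1, by omega, rfl⟩)
    · -- card = k
      have himg : ((Finset.range (k - 1)).image (fun i => cyc n i ℓ)).card = k - 1 := by
        rw [Finset.card_image_of_injOn, Finset.card_range]
        intro i hi j hj hij
        simp only [Finset.coe_range, Set.mem_Iio] at hi hj
        by_contra hne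
        exact cyc_ne (by omega) (by omega) hℓ1 hℓlt hne hij
      have hXnotin : X ∉ (Finset.range (k - 1)).image (fun i => cyc n i ℓ) := by
        intro h
        apply hXF
        rw [Finset.mem_image] at h
        obtain ⟨i, hi, hXeq⟩ := h
        rw [Finset.mem_range] at hi
        rw [← hXeq, mem_satFam]
        exact Or.inr (Or.inr ⟨i, hi, ℓ, hℓ1, by omega, rfl⟩)
      rw [Finset.card_insert_of_notMem hXnotin, himg]
      omega
    · -- pairwise incomparable: all have card ℓ
      have hc : ∀ s ∈ insert X ((Finset.range (k - 1)).image (fun i => cyc n i ℓ)),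
          s.card = ℓ := by
        intro s hs
        rw [Finset.mem_insert] at hs
        rcases hs with rfl | hs
        · rfl
        · rw [Finset.mem_image] at hs
          obtain ⟨i, _, rfl⟩ := hs
          exact card_cyc hℓle
      intro A hA B hB hAB hsub
      exact hAB (Finset.eq_of_subset_of_card_le hsub (le_of_eq (by rw [hc A hA, hc B hB])))

/-- For all integers `n ≥ k ≥ 2`, `sat*(n, A_k) ≤ (k - 1)(n - 1) + 2`. -/
theorem sat_upper_bound (n k : ℕ) (hk : 2 ≤ k) (hn : k ≤ n) :
    ∃ m : ℕ,
      IsLeast {m : ℕ | ∃ F : Finset (Finset ℕ), IsAntichainSaturated n k F ∧ F.card = m} m ∧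
      m ≤ (k - 1) * (n - 1) + 2 := by
  set T := {m : ℕ | ∃ F : Finset (Finset ℕ), IsAntichainSaturated n k F ∧ F.card = m} with hT
  have hmem : (satFam n k).card ∈ T := ⟨satFam n k, satFam_saturated n k hk hn, rfl⟩
  refine ⟨sInf T, ⟨Nat.sInf_mem ⟨_, hmem⟩, fun b hb => Nat.sInf_le hb⟩,
    le_trans (Nat.sInf_le hmem) (satFam_card n k)⟩
end

section
/- Let n ≥ 5 and let F be a 5-antichain saturated family of subsets of [n]. Then there is no i with 1 ≤ i ≤ n − 1 such that F contains exactly one set of size i. -/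
open Finset

/-!
A family with no 5-antichain is, by Dilworth's theorem, a union of four chains. Saturation
means that for every set `Y ∉ F` of `[n]` some 4-antichain of `F` is incomparable with `Y`, and a
4-antichain meets each of the four chains. If `S` were the only member of `F` of size `i`, take a
chain `C` not containing `S`: it skips level `i`, so some `Y ≠ S` of size `i` is comparable with
every member of `C`. Then `Y ∉ F`, yet the 4-antichain for `Y` contains a member of `C`.
-/

section Dilworth

variable {α : Type*} [PartialOrder α]

/-- A cover of `s` by `w` disjoint (possibly empty) chains, encoded as a colouring `f` of `s` by
`0, …, w - 1` whose colour classes are chains. -/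
def IsChainColoring (s : Finset α) (w : ℕ) (f : α → ℕ) : Prop :=
  (∀ x ∈ s, f x < w) ∧ ∀ x ∈ s, ∀ y ∈ s, f x = f y → x ≤ y ∨ y ≤ x

lemma IsChain.exists_forall_le_of_finset {t : Finset α} (ht : IsChain (· ≤ ·) (t : Set α))
    (hne : t.Nonempty) : ∃ x ∈ t, ∀ y ∈ t, y ≤ x := by
  obtain ⟨x, hx⟩ := t.exists_maximal hne
  exact ⟨x, hx.prop, fun y hy => (ht.total hx.prop hy).elim (hx.2 hy) id⟩

namespace IsChainColoring

variable {s : Finset α} {w : ℕ} {f : α → ℕ}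

lemma injOn_of_isAntichain (hf : IsChainColoring s w f) {t : Finset α} (hts : t ⊆ s)
    (ht : IsAntichain (· ≤ ·) (t : Set α)) : Set.InjOn f t := by
  intro x hx y hy hxy
  by_contra hne
  rcases hf.2 x (hts hx) y (hts hy) hxy with h | h
  exacts [ht hx hy hne h, ht hy hx (Ne.symm hne) h]

lemma isChain_of_forall_color_eq (hf : IsChainColoring s w f) {t : Set α} (hts : t ⊆ s) {j : ℕ}
    (htj : ∀ x ∈ t, f x = j) : IsChain (· ≤ ·) t := fun x hx y hy _ =>
  hf.2 x (hts hx) y (hts hy) ((htj x hx).trans (htj y hy).symm)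

lemma exists_mem_of_card_eq (hf : IsChainColoring s w f) {t : Finset α} (hts : t ⊆ s)
    (ht : IsAntichain (· ≤ ·) (t : Set α)) (htw : t.card = w) {j : ℕ} (hj : j < w) :
    ∃ x ∈ t, f x = j :=
  surjOn_of_injOn_of_card_le f (t := range w) (fun x hx => mem_range.2 (hf.1 x (hts hx)))
    (hf.injOn_of_isAntichain hts ht) (by simp [htw]) (mem_range.2 hj)

lemma union_of_isChain [DecidableEq α] (hf : IsChainColoring s w f) {K : Finset α}
    (hK : IsChain (· ≤ ·) (K : Set α)) :
    IsChainColoring (s ∪ K) (w + 1) (fun x => if x ∈ K then w else f x) := by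
  refine ⟨fun x hx => ?_, fun x hx y hy hxy => ?_⟩
  · dsimp only
    split_ifs with hxK
    · exact w.lt_succ_self
    · exact (hf.1 x ((mem_union.1 hx).resolve_right hxK)).trans w.lt_succ_self
  · have hs : ∀ z ∈ s ∪ K, z ∉ K → z ∈ s := fun z hz hzK => (mem_union.1 hz).resolve_right hzK
    by_cases hxK : x ∈ K <;> by_cases hyK : y ∈ K <;> simp only [hxK, hyK, if_true, if_false] at hxy
    · exact hK.total hxK hyK
    · exact absurd (hf.1 y (hs y hy hyK)) (by omega)
    · exact absurd (hf.1 x (hs x hx hxK)) (by omega)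
    · exact hf.2 x (hs x hx hxK) y (hs y hy hyK) hxy

lemma exists_greatest_of_color (hf : IsChainColoring s w f) {j : ℕ} (hj : j < w)
    (hs : ∃ t ⊆ s, IsAntichain (· ≤ ·) (t : Set α) ∧ t.card = w) :
    ∃ x, f x = j ∧ (∃ t ⊆ s, IsAntichain (· ≤ ·) (t : Set α) ∧ t.card = w ∧ x ∈ t) ∧
      ∀ t ⊆ s, IsAntichain (· ≤ ·) (t : Set α) → t.card = w → ∀ y ∈ t, f y = j → y ≤ x := by
  classical
  set M := s.filter fun y => f y = j ∧ ∃ t ⊆ s, IsAntichain (· ≤ ·) (t : Set α) ∧ t.card = w ∧ y ∈ t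
  have hM : IsChain (· ≤ ·) (M : Set α) := hf.isChain_of_forall_color_eq
    (fun y hy => (mem_filter.1 hy).1) fun y hy => (mem_filter.1 hy).2.1
  obtain ⟨t₀, ht₀s, ht₀, ht₀w⟩ := hs
  obtain ⟨y₀, hy₀, hy₀j⟩ := hf.exists_mem_of_card_eq ht₀s ht₀ ht₀w hj
  obtain ⟨x, hxM, hxtop⟩ := hM.exists_forall_le_of_finset
    ⟨y₀, mem_filter.2 ⟨ht₀s hy₀, hy₀j, t₀, ht₀s, ht₀, ht₀w, hy₀⟩⟩
  obtain ⟨-, hxj, hxt⟩ := mem_filter.1 hxM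
  exact ⟨x, hxj, hxt, fun t hts ht htw y hyt hyj =>
    hxtop y (mem_filter.2 ⟨hts hyt, hyj, t, hts, ht, htw, hyt⟩)⟩

/-- The tops of the colour classes among elements of maximum antichains form an antichain, so a
maximal `a` outside `s` lies above one of them. -/
lemma exists_greatest_of_color_le [DecidableEq α] {a : α} (hf : IsChainColoring s w f) (ha : ∀ x ∈ s, ¬ a ≤ x)
    (hw : ∀ t ⊆ insert a s, IsAntichain (· ≤ ·) (t : Set α) → t.card ≤ w)
    (hs : ∃ t ⊆ s, IsAntichain (· ≤ ·) (t : Set α) ∧ t.card = w) :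
    ∃ j < w, ∃ x ≤ a,
      ∀ t ⊆ s, IsAntichain (· ≤ ·) (t : Set α) → t.card = w → ∀ y ∈ t, f y = j → y ≤ x := by
  have : Nonempty α := ⟨a⟩
  have htop := fun j (hj : j < w) => hf.exists_greatest_of_color hj hs
  choose! x hxf hxs hxtop using htop
  have hxs' : ∀ j < w, x j ∈ s := fun j hj =>
    have ⟨_, hts, _, _, hxt⟩ := hxs j hj
    hts hxt
  have hxle : ∀ i < w, ∀ j < w, x i ≤ x j → i = j := by
    intro i hi j hj hle
    by_contra hij
    obtain ⟨t, hts, ht, htw, hxt⟩ := hxs j hj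
    obtain ⟨y, hyt, hyi⟩ := hf.exists_mem_of_card_eq hts ht htw hi
    refine ht hyt hxt (fun hyx => hij ?_) ((hxtop i hi t hts ht htw y hyt hyi).trans hle)
    rw [← hyi, hyx, hxf j hj]
  by_contra hcon
  have hxa : ∀ j < w, ¬ x j ≤ a := fun j hj hle => hcon ⟨j, hj, x j, hle, hxtop j hj⟩
  have hinj : Set.InjOn x (range w) := fun i hi j hj hij =>
    hxle i (mem_range.1 hi) j (mem_range.1 hj) hij.le
  have haT : a ∉ (range w).image x := by
    simp only [mem_image, mem_range, not_exists, not_and]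
    exact fun j hj hxj => hxa j hj hxj.le
  have hanti : IsAntichain (· ≤ ·) ((insert a ((range w).image x) : Finset α) : Set α) := by
    rw [coe_insert, coe_image, coe_range]
    refine IsAntichain.insert ?_ ?_ ?_
    · rintro _ ⟨i, hi, rfl⟩ _ ⟨j, hj, rfl⟩ hne hle
      exact hne (congrArg x (hxle i hi j hj hle))
    · rintro _ ⟨j, hj, rfl⟩ -
      exact hxa j hj
    · rintro _ ⟨j, hj, rfl⟩ -
      exact ha _ (hxs' j hj)
  have hcard := hw _ (insert_subset_insert a (image_subset_iff.2 fun j hj =>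
    hxs' j (mem_range.1 hj))) hanti
  rw [card_insert_of_notMem haT, card_image_of_injOn hinj, card_range] at hcard
  omega

/-- The induction step of Galvin's proof of Dilworth's theorem. -/
lemma exists_isChain_meets_antichains [DecidableEq α] (hf : IsChainColoring s w f) {a : α}
    (ha : ∀ x ∈ s, ¬ a ≤ x)
    (hw : ∀ t ⊆ insert a s, IsAntichain (· ≤ ·) (t : Set α) → t.card ≤ w) :
    ∃ K ⊆ insert a s, a ∈ K ∧ IsChain (· ≤ ·) (K : Set α) ∧
      ∀ t ⊆ s, IsAntichain (· ≤ ·) (t : Set α) → t.card = w → ∃ x ∈ t, x ∈ K := by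
  classical
  by_cases hs : ∃ t ⊆ s, IsAntichain (· ≤ ·) (t : Set α) ∧ t.card = w
  swap
  · exact ⟨{a}, by simp, mem_singleton_self a, by simp,
      fun t hts ht htw => (hs ⟨t, hts, ht, htw⟩).elim⟩
  obtain ⟨j, hj, x, hxa, hxtop⟩ := hf.exists_greatest_of_color_le ha hw hs
  refine ⟨insert a (s.filter fun y => f y = j ∧ y ≤ x),
    insert_subset_insert a (filter_subset _ _), mem_insert_self a _, ?_, fun t hts ht htw => ?_⟩
  · rw [coe_insert, coe_filter]
    exact (hf.isChain_of_forall_color_eq (fun y hy => hy.1) fun y hy => hy.2.1).insert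
      fun y hy _ => Or.inr (hy.2.2.trans hxa)
  · obtain ⟨y, hyt, hyj⟩ := hf.exists_mem_of_card_eq hts ht htw hj
    exact ⟨y, hyt, mem_insert_of_mem
      (mem_filter.2 ⟨hts hyt, hyj, hxtop t hts ht htw y hyt hyj⟩)⟩

end IsChainColoring

/-- Dilworth's theorem. -/
theorem exists_isChainColoring (s : Finset α) (w : ℕ)
    (h : ∀ t ⊆ s, IsAntichain (· ≤ ·) (t : Set α) → t.card ≤ w) :
    ∃ f, IsChainColoring s w f := by
  classical
  induction s using Finset.strongInduction generalizing w with
  | H s ih =>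
  rcases s.eq_empty_or_nonempty with rfl | hne
  · exact ⟨0, by simp [IsChainColoring]⟩
  obtain ⟨a, ha⟩ := s.exists_maximal hne
  obtain ⟨w, rfl⟩ : ∃ v, w = v + 1 :=
    Nat.exists_eq_add_one.2 (h {a} (by simpa using ha.prop) (by simp))
  obtain ⟨f, hf⟩ := ih (s.erase a) (erase_ssubset ha.prop) (w + 1)
    fun t hts => h t (hts.trans (erase_subset a s))
  obtain ⟨K, hKs, haK, hK, hmeet⟩ := hf.exists_isChain_meets_antichains (a := a)
    (fun x hx hax => (mem_erase.1 hx).1 (le_antisymm (ha.2 (mem_erase.1 hx).2 hax) hax))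
    (by rwa [insert_erase ha.prop])
  rw [insert_erase ha.prop] at hKs
  obtain ⟨g, hg⟩ := ih (s \ K) (sdiff_ssubset hKs ⟨a, haK⟩) w fun t hts ht => by
    have htw := h t (hts.trans sdiff_subset) ht
    by_contra! hlt
    obtain ⟨x, hxt, hxK⟩ := hmeet t (fun x hx => mem_erase.2
      ⟨fun hxa => (mem_sdiff.1 (hts hx)).2 (hxa ▸ haK), (mem_sdiff.1 (hts hx)).1⟩) ht (by omega)
    exact (mem_sdiff.1 (hts hxt)).2 hxK
  exact ⟨_, sdiff_union_of_subset hKs ▸ hg.union_of_isChain hK⟩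

end Dilworth

section ChainsOfFinsets

variable {β : Type*}

lemma IsChain.subset_of_card_le_s8 {C : Set (Finset β)} (hC : IsChain (· ≤ ·) C) {B D : Finset β}
    (hB : B ∈ C) (hD : D ∈ C) (hBD : B.card ≤ D.card) : B ⊆ D :=
  (hC.total hB hD).elim id fun hDB => (eq_of_subset_of_card_le hDB hBD).ge

variable [DecidableEq β]

lemma exists_subset_subset_card_eq_ne {D E : Finset β} {i : ℕ} (hDE : D ⊆ E) (hD : D.card < i)
    (hE : i < E.card) (S : Finset β) : ∃ Y, D ⊆ Y ∧ Y ⊆ E ∧ Y.card = i ∧ Y ≠ S := by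
  obtain ⟨Z, hDZ, hZE, hZ⟩ := exists_subsuperset_card_eq hDE (by omega : D.card ≤ i + 1) hE
  have hZD : 1 < (Z \ D).card := by rw [card_sdiff_of_subset hDZ]; omega
  obtain ⟨x, hx, y, hy, hxy⟩ := one_lt_card.1 hZD
  have hmem : ∀ z ∈ Z \ D, D ⊆ Z.erase z ∧ Z.erase z ⊆ E ∧ (Z.erase z).card = i := by
    intro z hz
    obtain ⟨hzZ, hzD⟩ := mem_sdiff.1 hz
    refine ⟨fun d hd => mem_erase.2 ⟨fun h => hzD (h ▸ hd), hDZ hd⟩,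
      (erase_subset z Z).trans hZE, ?_⟩
    rw [card_erase_of_mem hzZ, hZ, Nat.add_sub_cancel]
  by_cases hxS : Z.erase x = S
  · refine ⟨Z.erase y, (hmem y hy).1, (hmem y hy).2.1, (hmem y hy).2.2, fun hyS => ?_⟩
    have hxy' : x ∈ Z.erase y := mem_erase.2 ⟨hxy, (mem_sdiff.1 hx).1⟩
    rw [hyS, ← hxS] at hxy'
    exact notMem_erase x Z hxy'
  · exact ⟨Z.erase x, (hmem x hx).1, (hmem x hx).2.1, (hmem x hx).2.2, hxS⟩

lemma IsChain.exists_comparable_card_eq_ne {C : Finset (Finset β)}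
    (hC : IsChain (· ≤ ·) (C : Set (Finset β))) {U : Finset β} (hCU : ∀ B ∈ C, B ⊆ U) {i : ℕ}
    (hCi : ∀ B ∈ C, B.card ≠ i) (hi : 0 < i) (hiU : i < U.card) (S : Finset β) :
    ∃ Y ⊆ U, Y.card = i ∧ Y ≠ S ∧ ∀ B ∈ C, B ⊆ Y ∨ Y ⊆ B := by
  -- close the chain with `∅` and `U`, so that both sides of level `i` are occupied
  set C' := insert ∅ (insert U C)
  have hC'U : ∀ B ∈ C', B ⊆ U := by
    simpa [C', or_imp, forall_and] using hCU
  have hC' : IsChain (· ≤ ·) (C' : Set (Finset β)) := by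
    rw [coe_insert, coe_insert]
    refine (hC.insert fun B hB _ => Or.inr (hCU B hB)).insert fun B _ _ => Or.inl (empty_subset B)
  obtain ⟨D, hD, hDmax⟩ := exists_max_image (C'.filter (·.card < i)) card
    ⟨∅, mem_filter.2 ⟨mem_insert_self _ _, by simpa using hi⟩⟩
  obtain ⟨E, hE, hEmin⟩ := exists_min_image (C'.filter (i < ·.card)) card
    ⟨U, mem_filter.2 ⟨mem_insert_of_mem (mem_insert_self _ _), hiU⟩⟩
  obtain ⟨hDC, hDi⟩ := mem_filter.1 hD
  obtain ⟨hEC, hEi⟩ := mem_filter.1 hE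
  obtain ⟨Y, hDY, hYE, hY, hYS⟩ := exists_subset_subset_card_eq_ne
    (hC'.subset_of_card_le_s8 hDC hEC (by omega)) hDi hEi S
  refine ⟨Y, hYE.trans (hC'U E hEC), hY, hYS, fun B hB => ?_⟩
  have hBC : B ∈ C' := mem_insert_of_mem (mem_insert_of_mem hB)
  rcases (hCi B hB).lt_or_gt with hBi | hBi
  · exact Or.inl ((hC'.subset_of_card_le_s8 hBC hDC (hDmax B (mem_filter.2 ⟨hBC, hBi⟩))).trans hDY)
  · exact Or.inr (hYE.trans (hC'.subset_of_card_le_s8 hEC hBC (hEmin B (mem_filter.2 ⟨hBC, hBi⟩))))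

end ChainsOfFinsets

lemma containsAntichain_iff {k : ℕ} {F : Finset (Finset ℕ)} :
    ContainsAntichain k F ↔ ∃ S ⊆ F, S.card = k ∧ IsAntichain (· ≤ ·) (S : Set (Finset ℕ)) :=
  ⟨fun ⟨S, hSF, hS, hanti⟩ => ⟨S, hSF, hS, fun A hA B hB => hanti A hA B hB⟩,
    fun ⟨S, hSF, hS, hanti⟩ => ⟨S, hSF, hS, fun _ hA _ hB => hanti hA hB⟩⟩

lemma card_le_of_not_containsAntichain {k : ℕ} {F : Finset (Finset ℕ)}
    (hF : ¬ ContainsAntichain (k + 1) F) {t : Finset (Finset ℕ)} (htF : t ⊆ F)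
    (ht : IsAntichain (· ≤ ·) (t : Set (Finset ℕ))) : t.card ≤ k := by
  by_contra! hk
  obtain ⟨S, hSt, hS⟩ := exists_subset_card_eq (s := t) hk
  exact hF (containsAntichain_iff.2 ⟨S, hSt.trans htF, hS, ht.subset hSt⟩)

lemma exists_antichain_incomparable_of_containsAntichain_insert {k : ℕ}
    {F : Finset (Finset ℕ)} {Y : Finset ℕ} (hF : ¬ ContainsAntichain (k + 1) F)
    (hY : ContainsAntichain (k + 1) (insert Y F)) :
    ∃ A ⊆ F, A.card = k ∧ IsAntichain (· ≤ ·) (A : Set (Finset ℕ)) ∧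
      ∀ B ∈ A, ¬ (B ⊆ Y ∨ Y ⊆ B) := by
  obtain ⟨T, hTF, hT, hanti⟩ := containsAntichain_iff.1 hY
  have hYT : Y ∈ T := by
    by_contra hYT
    exact hF (containsAntichain_iff.2
      ⟨T, fun B hB => (mem_insert.1 (hTF hB)).resolve_left (ne_of_mem_of_not_mem hB hYT), hT,
        hanti⟩)
  refine ⟨T.erase Y, fun B hB => (mem_insert.1 (hTF (mem_of_mem_erase hB))).resolve_left
    (ne_of_mem_erase hB), by rw [card_erase_of_mem hYT, hT, Nat.add_sub_cancel], hanti.subset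
    (by simp), fun B hB hcomp => ?_⟩
  have hBY := ne_of_mem_erase hB
  exact hcomp.elim (hanti (mem_of_mem_erase hB) hYT hBY) (hanti hYT (mem_of_mem_erase hB) hBY.symm)

theorem IsAntichainSaturated.card_filter_card_eq_ne_one {n k : ℕ} {F : Finset (Finset ℕ)}
    (hF : IsAntichainSaturated n (k + 1) F) (hk : 2 ≤ k) {i : ℕ} (hi : 0 < i) (hin : i < n) :
    (F.filter fun A => A.card = i).card ≠ 1 := by
  classical
  obtain ⟨hFn, hno, hsat⟩ := hF
  intro hlevel
  obtain ⟨S, hS⟩ := card_eq_one.1 hlevel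
  have hlevelS : ∀ A ∈ F, A.card = i → A = S := fun A hA hAi =>
    mem_singleton.1 (hS ▸ mem_filter.2 ⟨hA, hAi⟩)
  obtain ⟨f, hf⟩ := exists_isChainColoring F k fun t => card_le_of_not_containsAntichain hno
  obtain ⟨j, hjk, hjS⟩ : ∃ j < k, ∀ A ∈ F, f A = j → A ≠ S :=
    if h : f S = 0 then ⟨1, by omega, fun A _ hA hAS => by subst hAS; omega⟩
    else ⟨0, by omega, fun A _ hA hAS => by subst hAS; omega⟩
  set C := F.filter fun A => f A = j
  have hC : IsChain (· ≤ ·) (C : Set (Finset ℕ)) := hf.isChain_of_forall_color_eq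
    (fun B hB => (mem_filter.1 hB).1) fun B hB => (mem_filter.1 hB).2
  have hCi : ∀ B ∈ C, B.card ≠ i := fun B hB hBi =>
    have ⟨hBF, hBj⟩ := mem_filter.1 hB
    hjS B hBF hBj (hlevelS B hBF hBi)
  obtain ⟨Y, hYn, hYi, hYS, hYC⟩ := hC.exists_comparable_card_eq_ne
    (fun B hB => hFn B (mem_filter.1 hB).1) hCi hi (by simpa using hin) S
  obtain ⟨A, hAF, hA, hanti, hAY⟩ := exists_antichain_incomparable_of_containsAntichain_insert hno
    (hsat Y hYn fun hYF => hYS (hlevelS Y hYF hYi))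
  obtain ⟨B, hBA, hBj⟩ := hf.exists_mem_of_card_eq hAF hanti hA hjk
  exact hAY B hBA (hYC B (mem_filter.2 ⟨hAF hBA, hBj⟩))

theorem five_saturated_no_level_one_general (n : ℕ) (F : Finset (Finset ℕ))
    (hF : IsAntichainSaturated n 5 F) :
    ¬ ∃ i, 1 ≤ i ∧ i ≤ n - 1 ∧ (F.filter fun A => A.card = i).card = 1 := by
  rintro ⟨i, hi, hin, hlevel⟩
  exact IsAntichainSaturated.card_filter_card_eq_ne_one (k := 4) hF (by norm_num) hi (by omega)
    hlevel

/-- For `n ≥ 5` and `F` a 5-antichain saturated family of subsets of `[n]`, no level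
`1 ≤ i ≤ n - 1` of `F` has exactly one set. -/
theorem five_saturated_no_level_one (n : ℕ) (hn : 5 ≤ n) (F : Finset (Finset ℕ))
    (hF : IsAntichainSaturated n 5 F) :
    ¬ ∃ i, 1 ≤ i ∧ i ≤ n - 1 ∧ (F.filter fun A => A.card = i).card = 1 :=
  five_saturated_no_level_one_general n F hF
end

section
/- For every integer n ≥ 5 there exists a 5-antichain saturated family of subsets of [n] of size exactly 4n − 2; in particular, the union of 4 full chains of subsets of [n] that pairwise intersect only in ∅ and [n] is such a family. -/
open Finset

-- full chain contains a set of each size k ≤ n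
lemma full_chain_exists_card {n : ℕ} {D : Finset (Finset ℕ)} (hfull : IsFullChain n D)
    {k : ℕ} (hk : k ≤ n) : ∃ A ∈ D, A.card = k := by
  have hinj : Set.InjOn Finset.card (D : Set (Finset ℕ)) := by
    intro A hA B hB h
    rcases hfull.1.2 A hA B hB with hs | hs
    · exact Finset.eq_of_subset_of_card_le hs h.ge
    · exact (Finset.eq_of_subset_of_card_le hs h.le).symm
  have himg : D.image Finset.card = Finset.range (n+1) := by
    apply Finset.eq_of_subset_of_card_le
    · intro c hc
      rw [Finset.mem_image] at hc
      obtain ⟨A, hA, rfl⟩ := hc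
      rw [Finset.mem_range, Nat.lt_succ_iff]
      calc A.card ≤ (Finset.Icc 1 n).card := Finset.card_le_card (hfull.1.1 A hA)
        _ = n := by simp
    · rw [Finset.card_range, Finset.card_image_of_injOn hinj, hfull.2]
  have : k ∈ D.image Finset.card := by rw [himg]; simpa [Nat.lt_succ_iff]
  rw [Finset.mem_image] at this
  obtain ⟨A, hA, hc⟩ := this
  exact ⟨A, hA, hc⟩

lemma main_part (n : ℕ) (hn : 5 ≤ n) (D : Fin 4 → Finset (Finset ℕ))
    (hfull : ∀ i, IsFullChain n (D i))
    (hint : ∀ i j, i ≠ j → D i ∩ D j = ({∅, Finset.Icc 1 n} : Finset (Finset ℕ))) :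
    IsAntichainSaturated n 5 (Finset.univ.biUnion D) ∧
      (Finset.univ.biUnion D).card = 4 * n - 2 := by
  set F := Finset.univ.biUnion D with hF
  have hICCne : (Finset.Icc 1 n) ≠ ∅ := by
    apply Finset.nonempty_iff_ne_empty.mp
    exact ⟨1, by simp; omega⟩
  have hmem2 : ∀ i, ∅ ∈ D i ∧ Finset.Icc 1 n ∈ D i := by
    intro i
    obtain ⟨j, hj⟩ : ∃ j : Fin 4, i ≠ j := by
      obtain ⟨j, hj⟩ := exists_ne i; exact ⟨j, hj.symm⟩
    have h := hint i j hj
    constructor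
    · have : ∅ ∈ D i ∩ D j := by rw [h]; simp
      exact (Finset.mem_inter.mp this).1
    · have : Finset.Icc 1 n ∈ D i ∩ D j := by rw [h]; simp
      exact (Finset.mem_inter.mp this).1
  -- part 1: subsets
  have hsub : ∀ A ∈ F, A ⊆ Finset.Icc 1 n := by
    intro A hA
    rw [hF, Finset.mem_biUnion] at hA
    obtain ⟨i, _, hi⟩ := hA
    exact (hfull i).1.1 A hi
  -- part 2: no 5-antichain
  have hno5 : ¬ ContainsAntichain 5 F := by
    rintro ⟨S, hS, hcard, hanti⟩
    have hex : ∀ A : Finset ℕ, ∃ i : Fin 4, A ∈ S → A ∈ D i := by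
      intro A
      by_cases hA : A ∈ S
      · have := hS hA
        rw [hF, Finset.mem_biUnion] at this
        obtain ⟨i, _, hi⟩ := this
        exact ⟨i, fun _ => hi⟩
      · exact ⟨0, fun h => absurd h hA⟩
    choose f hf using hex
    obtain ⟨A, hA, B, hB, hne, hfe⟩ :=
      Finset.exists_ne_map_eq_of_card_lt_of_maps_to
        (by rw [hcard]; simp : (Finset.univ : Finset (Fin 4)).card < S.card)
        (fun A _ => Finset.mem_univ (f A))
    have hAD : A ∈ D (f A) := hf A hA
    have hBD : B ∈ D (f A) := hfe ▸ hf B hB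
    rcases (hfull (f A)).1.2 A hAD B hBD with hs | hs
    · exact hanti A hA B hB hne hs
    · exact hanti B hB A hA hne.symm hs
  -- part 3: saturation
  have hsat : ∀ X ⊆ Finset.Icc 1 n, X ∉ F → ContainsAntichain 5 (insert X F) := by
    intro X hXsub hXF
    have hXne : X ≠ ∅ := by
      rintro rfl
      exact hXF (Finset.mem_biUnion.mpr ⟨0, Finset.mem_univ _, (hmem2 0).1⟩)
    have hXnI : X ≠ Finset.Icc 1 n := by
      rintro rfl
      exact hXF (Finset.mem_biUnion.mpr ⟨0, Finset.mem_univ _, (hmem2 0).2⟩)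
    set k := X.card with hk
    have hk1 : 1 ≤ k := Finset.card_pos.mpr (Finset.nonempty_iff_ne_empty.mpr hXne)
    have hkn : k ≤ n := by
      calc k ≤ (Finset.Icc 1 n).card := Finset.card_le_card hXsub
        _ = n := by simp
    have hklt : k < n := by
      rcases lt_or_eq_of_le hkn with h | h
      · exact h
      · exfalso
        apply hXnI
        apply Finset.eq_of_subset_of_card_le hXsub
        have : (Finset.Icc 1 n).card = n := by simp
        omega
    have hAex : ∀ i : Fin 4, ∃ A ∈ D i, A.card = k := fun i =>
      full_chain_exists_card (hfull i) hkn
    choose A hAD hAc using hAex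
    have hAne : ∀ i j : Fin 4, i ≠ j → A i ≠ A j := by
      intro i j hij he
      have : A i ∈ D i ∩ D j := Finset.mem_inter.mpr ⟨hAD i, he ▸ hAD j⟩
      rw [hint i j hij] at this
      rcases Finset.mem_insert.mp this with h | h
      · have h2 := hAc i; rw [h] at h2; simp at h2; omega
      · rw [Finset.mem_singleton] at h
        have h2 := hAc i; rw [h] at h2; simp at h2; omega
    have hAX : ∀ i, A i ≠ X := by
      intro i he
      exact hXF (Finset.mem_biUnion.mpr ⟨i, Finset.mem_univ _, he ▸ hAD i⟩)
    -- antichain: X plus the A i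
    refine ⟨insert X ((Finset.univ : Finset (Fin 4)).image A), ?_, ?_, ?_⟩
    · intro B hB
      rcases Finset.mem_insert.mp hB with h | h
      · rw [h]; exact Finset.mem_insert_self _ _
      · rw [Finset.mem_image] at h
        obtain ⟨i, _, rfl⟩ := h
        exact Finset.mem_insert_of_mem (Finset.mem_biUnion.mpr ⟨i, Finset.mem_univ _, hAD i⟩)
    · rw [Finset.card_insert_of_notMem, Finset.card_image_of_injOn]
      · simp
      · intro i _ j _ h
        by_contra hij
        exact hAne i j hij h
      · rw [Finset.mem_image]
        rintro ⟨i, _, hi⟩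
        exact hAX i hi
    · -- pairwise incomparable: all have card k, pairwise distinct
      have hcardall : ∀ B ∈ insert X ((Finset.univ : Finset (Fin 4)).image A), B.card = k := by
        intro B hB
        rcases Finset.mem_insert.mp hB with h | h
        · rw [h]
        · rw [Finset.mem_image] at h
          obtain ⟨i, _, rfl⟩ := h
          exact hAc i
      intro B hB C hC hne hsub'
      apply hne
      apply Finset.eq_of_subset_of_card_le hsub'
      rw [hcardall B hB, hcardall C hC]
  -- part 4: cardinality
  have hcardF : F.card = 4 * n - 2 := by
    classical
    set P : Finset (Finset ℕ) := {∅, Finset.Icc 1 n} with hP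
    set M : Fin 4 → Finset (Finset ℕ) := fun i => D i \ P with hM
    have hFeq : F = P ∪ Finset.univ.biUnion M := by
      ext B
      simp only [hF, hP, hM, Finset.mem_union, Finset.mem_biUnion, Finset.mem_sdiff]
      constructor
      · rintro ⟨i, hi, hB⟩
        by_cases hBP : B ∈ ({∅, Finset.Icc 1 n} : Finset (Finset ℕ))
        · exact Or.inl hBP
        · exact Or.inr ⟨i, hi, hB, hBP⟩
      · rintro (h | ⟨i, hi, hB, _⟩)
        · rcases Finset.mem_insert.mp h with h | h
          · exact ⟨0, Finset.mem_univ _, h ▸ (hmem2 0).1⟩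
          · rw [Finset.mem_singleton] at h
            exact ⟨0, Finset.mem_univ _, h ▸ (hmem2 0).2⟩
        · exact ⟨i, hi, hB⟩
    have hPcard : P.card = 2 := by
      rw [hP, Finset.card_insert_of_notMem (by simpa using hICCne.symm), Finset.card_singleton]
    have hMcard : ∀ i, (M i).card = n - 1 := by
      intro i
      have hPsub : P ⊆ D i := by
        intro B hB
        rcases Finset.mem_insert.mp hB with h | h
        · exact h ▸ (hmem2 i).1
        · rw [Finset.mem_singleton] at h; exact h ▸ (hmem2 i).2
      rw [hM]
      simp only
      rw [Finset.card_sdiff_of_subset hPsub, (hfull i).2, hPcard]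
      omega
    have hdisjPM : Disjoint P (Finset.univ.biUnion M) := by
      rw [Finset.disjoint_left]
      intro B hBP hBM
      rw [Finset.mem_biUnion] at hBM
      obtain ⟨i, _, hB⟩ := hBM
      exact (Finset.mem_sdiff.mp hB).2 hBP
    have hMdisj : ∀ i ∈ (Finset.univ : Finset (Fin 4)), ∀ j ∈ Finset.univ, i ≠ j →
        Disjoint (M i) (M j) := by
      intro i _ j _ hij
      rw [Finset.disjoint_left]
      intro B hBi hBj
      have h1 := Finset.mem_sdiff.mp hBi
      have h2 := Finset.mem_sdiff.mp hBj
      exact h1.2 (hint i j hij ▸ Finset.mem_inter.mpr ⟨h1.1, h2.1⟩)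
    rw [hFeq, Finset.card_union_of_disjoint hdisjPM, Finset.card_biUnion hMdisj, hPcard]
    rw [Finset.sum_congr rfl (fun i _ => hMcard i), Finset.sum_const]
    simp
    omega
  exact ⟨⟨hsub, hno5, hsat⟩, hcardF⟩

/-- The set of size `k` in the `i`-th cyclic chain: elements `(i+t) % n + 1` for `t < k`. -/
def Cset (n i k : ℕ) : Finset ℕ := (Finset.range k).image (fun t => (i + t) % n + 1)

lemma mem_Cset {n i k x : ℕ} : x ∈ Cset n i k ↔ ∃ t < k, (i + t) % n + 1 = x := by
  simp [Cset]

lemma Cset_injOn {n : ℕ} (i : ℕ) {k : ℕ} (hk : k ≤ n) :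
    Set.InjOn (fun t => (i + t) % n + 1) (Finset.range k) := by
  intro t1 h1 t2 h2 h
  simp only [Finset.coe_range, Set.mem_Iio] at h1 h2
  dsimp only at h
  have h' : (i + t1) % n = (i + t2) % n := by omega
  have := Nat.ModEq.add_left_cancel' i (h' : (i + t1) ≡ (i + t2) [MOD n])
  have h2' : t1 % n = t2 % n := this
  rw [Nat.mod_eq_of_lt (by omega), Nat.mod_eq_of_lt (by omega)] at h2'
  exact h2'

lemma card_Cset {n i k : ℕ} (hk : k ≤ n) : (Cset n i k).card = k := by
  rw [Cset, Finset.card_image_of_injOn (Cset_injOn i hk), Finset.card_range]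

lemma Cset_subset {n i k : ℕ} (hn : 0 < n) : Cset n i k ⊆ Finset.Icc 1 n := by
  intro x hx
  obtain ⟨t, _, rfl⟩ := mem_Cset.mp hx
  have := Nat.mod_lt (i + t) hn
  rw [Finset.mem_Icc]
  omega

lemma Cset_mono {n i k l : ℕ} (h : k ≤ l) : Cset n i k ⊆ Cset n i l :=
  Finset.image_subset_image (Finset.range_subset_range.mpr h)

lemma Cset_zero {n i : ℕ} : Cset n i 0 = ∅ := by simp [Cset]

lemma Cset_top {n i : ℕ} (hn : 0 < n) : Cset n i n = Finset.Icc 1 n := by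
  apply Finset.eq_of_subset_of_card_le (Cset_subset hn)
  rw [card_Cset le_rfl, Nat.card_Icc]
  omega

lemma Cset_ne {n i j k : ℕ} (hi : i < n) (hj : j < n) (hij : i ≠ j)
    (hk1 : 1 ≤ k) (hkn : k < n) : Cset n i k ≠ Cset n j k := by
  intro he
  have hn : 0 < n := by omega
  have hjmem : j + 1 ∈ Cset n j k :=
    mem_Cset.mpr ⟨0, hk1, by simp [Nat.mod_eq_of_lt hj]⟩
  rw [← he] at hjmem
  obtain ⟨u, hu, huj⟩ := mem_Cset.mp hjmem
  have huj' : (i + u) % n = j := by omega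
  have hu0 : u ≠ 0 := by
    rintro rfl
    rw [Nat.add_zero, Nat.mod_eq_of_lt hi] at huj'
    exact hij huj'
  have hpmem : (j + (n - 1)) % n + 1 ∈ Cset n i k := by
    apply mem_Cset.mpr
    refine ⟨u - 1, by omega, ?_⟩
    congr 1
    have h1 : (i + u) ≡ j [MOD n] := by
      show (i + u) % n = j % n
      rw [huj', Nat.mod_eq_of_lt hj]
    have h2 : i + u + (n - 1) ≡ j + (n - 1) [MOD n] := h1.add_right (n - 1)
    have key : i + (u - 1) + n = i + u + (n - 1) := by omega
    show (i + (u - 1)) % n = (j + (n - 1)) % n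
    rw [← Nat.add_mod_right (i + (u - 1)) n, key]
    exact h2
  have hpnot : (j + (n - 1)) % n + 1 ∉ Cset n j k := by
    intro hp
    obtain ⟨t, ht, hte⟩ := mem_Cset.mp hp
    have h3 : (j + t) % n = (j + (n - 1)) % n := by omega
    have h4 : t ≡ n - 1 [MOD n] := Nat.ModEq.add_left_cancel' j h3
    have h5 : t % n = (n - 1) % n := h4
    rw [Nat.mod_eq_of_lt (by omega : t < n), Nat.mod_eq_of_lt (by omega : n - 1 < n)] at h5
    omega
  rw [he] at hpmem
  exact hpnot hpmem

/-- The `i`-th cyclic full chain. -/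
def Dchain (n i : ℕ) : Finset (Finset ℕ) := (Finset.range (n + 1)).image (Cset n i)

lemma Dchain_injOn {n i : ℕ} : Set.InjOn (Cset n i) (Finset.range (n + 1)) := by
  intro k hk l hl h
  simp only [Finset.coe_range, Set.mem_Iio] at hk hl
  have := congrArg Finset.card h
  rwa [card_Cset (by omega), card_Cset (by omega)] at this

lemma Dchain_full {n i : ℕ} (hn : 0 < n) : IsFullChain n (Dchain n i) := by
  refine ⟨⟨?_, ?_⟩, ?_⟩
  · intro A hA
    rw [Dchain, Finset.mem_image] at hA
    obtain ⟨k, _, rfl⟩ := hA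
    exact Cset_subset hn
  · intro A hA B hB
    rw [Dchain, Finset.mem_image] at hA hB
    obtain ⟨k, _, rfl⟩ := hA
    obtain ⟨l, _, rfl⟩ := hB
    rcases le_total k l with h | h
    · exact Or.inl (Cset_mono h)
    · exact Or.inr (Cset_mono h)
  · rw [Dchain, Finset.card_image_of_injOn Dchain_injOn, Finset.card_range]

lemma Dchain_inter {n i j : ℕ} (hi : i < n) (hj : j < n) (hij : i ≠ j) :
    Dchain n i ∩ Dchain n j = ({∅, Finset.Icc 1 n} : Finset (Finset ℕ)) := by
  have hn : 0 < n := by omega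
  ext B
  rw [Finset.mem_inter]
  constructor
  · rintro ⟨h1, h2⟩
    rw [Dchain, Finset.mem_image] at h1 h2
    obtain ⟨k, hk, rfl⟩ := h1
    obtain ⟨l, hl, he⟩ := h2
    rw [Finset.mem_range] at hk hl
    have hkl : l = k := by
      have := congrArg Finset.card he
      rwa [card_Cset (by omega), card_Cset (by omega)] at this
    subst hkl
    rcases Nat.eq_zero_or_pos l with h0 | h0
    · subst h0
      rw [Cset_zero]
      simp
    rcases eq_or_lt_of_le (by omega : l ≤ n) with hln | hln
    · subst hln
      rw [Cset_top hn]
      simp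
    · exact absurd he (Cset_ne hj hi hij.symm h0 hln)
  · intro h
    rcases Finset.mem_insert.mp h with h | h
    · subst h
      constructor <;>
        · rw [Dchain, Finset.mem_image]
          exact ⟨0, by simp, Cset_zero⟩
    · rw [Finset.mem_singleton] at h
      subst h
      constructor <;>
        · rw [Dchain, Finset.mem_image]
          exact ⟨n, by simp, Cset_top hn⟩

/-- For every `n ≥ 5` there is a 5-antichain saturated family of subsets of `[n]` of size
exactly `4n - 2`; in particular, the union of 4 full chains that pairwise intersect only in
`∅` and `[n]` is such a family. -/
theorem exists_five_saturated (n : ℕ) (hn : 5 ≤ n) :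
    (∃ F : Finset (Finset ℕ), IsAntichainSaturated n 5 F ∧ F.card = 4 * n - 2) ∧
    (∀ D : Fin 4 → Finset (Finset ℕ), (∀ i, IsFullChain n (D i)) →
      (∀ i j, i ≠ j → D i ∩ D j = ({∅, Finset.Icc 1 n} : Finset (Finset ℕ))) →
      IsAntichainSaturated n 5 (Finset.univ.biUnion D) ∧
        (Finset.univ.biUnion D).card = 4 * n - 2) := by
  have hmain := main_part n hn
  constructor
  · set D : Fin 4 → Finset (Finset ℕ) := fun i => Dchain n i.val with hD
    have hfull : ∀ i, IsFullChain n (D i) := fun i => Dchain_full (by omega)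
    have hint : ∀ i j, i ≠ j → D i ∩ D j = ({∅, Finset.Icc 1 n} : Finset (Finset ℕ)) := by
      intro i j hij
      have h4i : (i : ℕ) < 4 := i.isLt
      have h4j : (j : ℕ) < 4 := j.isLt
      exact Dchain_inter (by omega) (by omega) (fun h => hij (Fin.ext h))
    obtain ⟨h1, h2⟩ := hmain D hfull hint
    exact ⟨_, h1, h2⟩
  · exact fun D h1 h2 => hmain D h1 h2
end

section
/- Let n ≥ 6, and let F be the family of subsets of [n] consisting of ∅, [n], the singletons {1},{2},{3},{4}, the co-singletons [n]\{1},[n]\{2},[n]\{3},[n]\{4}, together with the five chains of sets {a,b}, {a,b,5}, {a,b,5,6}, …, [n]\{c,d} obtained by successively adding the elements 5, 6, …, n, where (a,b;c,d) ranges over (1,2;3,4), (1,3;2,4), (2,3;1,4), (4,3;1,2), (4,2;1,3). Then F is 6-antichain saturated and has size 5n − 5. -/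
open Finset

/-- The chain `{a,b}, {a,b,5}, {a,b,5,6}, …, {a,b,5,6,…,n}` obtained from `{a,b}` by
successively adding the elements `5, 6, …, n`. -/
def pairChain (n a b : ℕ) : Finset (Finset ℕ) :=
  (Finset.Icc 4 n).image fun m => insert a (insert b (Finset.Icc 5 m))

/-- The family consisting of `∅`, `[n]`, the singletons `{1},{2},{3},{4}`, the
co-singletons `[n]\{1},…,[n]\{4}`, together with the five chains `pairChain n a b` for
`(a,b) = (1,2), (1,3), (2,3), (4,3), (4,2)` (whose top sets are `[n]\{3,4}`, `[n]\{2,4}`,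
`[n]\{1,4}`, `[n]\{1,2}`, `[n]\{1,3}` respectively). -/
def sixSatFamily (n : ℕ) : Finset (Finset ℕ) :=
  ({∅, Finset.Icc 1 n, {1}, {2}, {3}, {4},
    Finset.Icc 1 n \ {1}, Finset.Icc 1 n \ {2},
    Finset.Icc 1 n \ {3}, Finset.Icc 1 n \ {4}} : Finset (Finset ℕ)) ∪
  pairChain n 1 2 ∪ pairChain n 1 3 ∪ pairChain n 2 3 ∪ pairChain n 4 3 ∪ pairChain n 4 2

namespace SixSat


def E (a b m : ℕ) : Finset ℕ := insert a (insert b (Finset.Icc 5 m))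

lemma mem_E_iff {x a b m : ℕ} : x ∈ E a b m ↔ x = a ∨ x = b ∨ (5 ≤ x ∧ x ≤ m) := by
  simp [E, Finset.mem_Icc]

lemma mem_pairChain {n a b : ℕ} {A : Finset ℕ} :
    A ∈ pairChain n a b ↔ ∃ m, 4 ≤ m ∧ m ≤ n ∧ A = E a b m := by
  simp only [pairChain, Finset.mem_image, Finset.mem_Icc, E]
  constructor
  · rintro ⟨m, ⟨h1, h2⟩, rfl⟩; exact ⟨m, h1, h2, rfl⟩
  · rintro ⟨m, h1, h2, rfl⟩; exact ⟨m, ⟨h1, h2⟩, rfl⟩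

lemma card_E {a b m : ℕ} (ha : a ≤ 4) (hb : b ≤ 4) (hab : a ≠ b) (hm : 4 ≤ m) :
    (E a b m).card = m - 2 := by
  rw [E, card_insert_of_notMem, card_insert_of_notMem, Nat.card_Icc]
  · omega
  · simp only [Finset.mem_Icc]; omega
  · simp only [Finset.mem_insert, Finset.mem_Icc]; omega

lemma card_pairChain {n a b : ℕ} (ha : a ≤ 4) (hb : b ≤ 4) (hab : a ≠ b) :
    (pairChain n a b).card = n - 3 := by
  rw [pairChain, Finset.card_image_of_injOn, Nat.card_Icc]
  · omega
  · intro m hm m' hm' h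
    simp only [Finset.coe_Icc, Set.mem_Icc] at hm hm'
    have h1 : (E a b m).card = m - 2 := card_E ha hb hab hm.1
    have h2 : (E a b m').card = m' - 2 := card_E ha hb hab hm'.1
    simp only at h
    rw [E] at h1 h2; rw [h] at h1; omega

lemma E_mono {a b m m' : ℕ} (h : m ≤ m') : E a b m ⊆ E a b m' := by
  intro x hx; rw [mem_E_iff] at hx ⊢; omega

lemma singleton_subset_E {s a b m : ℕ} (h : s = a ∨ s = b) : {s} ⊆ E a b m := by
  simp only [singleton_subset_iff, mem_E_iff]; tauto

lemma E_subset_co {n a b c m : ℕ} (hn : 6 ≤ n) (ha1 : 1 ≤ a) (ha4 : a ≤ 4) (hb1 : 1 ≤ b)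
    (hb4 : b ≤ 4) (hc4 : c ≤ 4) (hac : a ≠ c) (hbc : b ≠ c) (hm : m ≤ n) :
    E a b m ⊆ Finset.Icc 1 n \ {c} := by
  intro x hx; rw [mem_E_iff] at hx
  simp only [Finset.mem_sdiff, Finset.mem_Icc, Finset.mem_singleton]; omega

lemma E_subset_Icc {n a b m : ℕ} (hn : 6 ≤ n) (ha1 : 1 ≤ a) (ha4 : a ≤ 4) (hb1 : 1 ≤ b)
    (hb4 : b ≤ 4) (hm : m ≤ n) : E a b m ⊆ Finset.Icc 1 n := by
  intro x hx; rw [mem_E_iff] at hx; simp only [Finset.mem_Icc]; omega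

lemma singleton_subset_co {n s c : ℕ} (hn : 6 ≤ n) (hs1 : 1 ≤ s) (hs4 : s ≤ 4) (hsc : s ≠ c) :
    ({s} : Finset ℕ) ⊆ Finset.Icc 1 n \ {c} := by
  simp only [singleton_subset_iff, Finset.mem_sdiff, Finset.mem_Icc, Finset.mem_singleton]; omega

lemma singleton_subset_Icc {n s : ℕ} (hn : 6 ≤ n) (hs1 : 1 ≤ s) (hs4 : s ≤ 4) :
    ({s} : Finset ℕ) ⊆ Finset.Icc 1 n := by
  simp only [singleton_subset_iff, Finset.mem_Icc]; omega

lemma E_not_subset {a b c d m m' : ℕ} (hc : c ≤ 4) (hd : d ≤ 4)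
    (hw : (a ≤ 4 ∧ a ≠ c ∧ a ≠ d) ∨ (b ≤ 4 ∧ b ≠ c ∧ b ≠ d)) :
    ¬ E a b m ⊆ E c d m' := by
  intro h
  rcases hw with ⟨h4, h1, h2⟩ | ⟨h4, h1, h2⟩
  · have := h (show a ∈ E a b m by rw [mem_E_iff]; tauto)
    rw [mem_E_iff] at this; omega
  · have := h (show b ∈ E a b m by rw [mem_E_iff]; tauto)
    rw [mem_E_iff] at this; omega

lemma ne_of_not_subset {A B : Finset ℕ} (h : ¬ A ⊆ B) : A ≠ B := fun e => h (by rw [e])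




def D (n s a b c : ℕ) : Finset (Finset ℕ) :=
  insert ∅ (insert {s} (insert (Finset.Icc 1 n \ {c})
    (insert (Finset.Icc 1 n) (pairChain n a b))))

lemma chainD {n s a b c : ℕ} (hn : 6 ≤ n) (hs : s = a ∨ s = b) (ha1 : 1 ≤ a) (ha4 : a ≤ 4)
    (hb1 : 1 ≤ b) (hb4 : b ≤ 4) (hc4 : c ≤ 4) (hac : a ≠ c) (hbc : b ≠ c) :
    ∀ A ∈ D n s a b c, ∀ B ∈ D n s a b c, A ⊆ B ∨ B ⊆ A := by
  have hs1 : 1 ≤ s := by omega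
  have hs4 : s ≤ 4 := by omega
  have hsc : s ≠ c := by omega
  intro A hA B hB
  simp only [D, mem_insert, mem_pairChain] at hA hB
  rcases hA with rfl | rfl | rfl | rfl | ⟨m, hm4, hmn, rfl⟩
  · exact Or.inl (empty_subset _)
  · rcases hB with rfl | rfl | rfl | rfl | ⟨m', hm4', hmn', rfl⟩
    · exact Or.inr (empty_subset _)
    · exact Or.inl (Finset.Subset.refl _)
    · exact Or.inl (singleton_subset_co hn hs1 hs4 hsc)
    · exact Or.inl (singleton_subset_Icc hn hs1 hs4)
    · exact Or.inl (singleton_subset_E hs)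
  · rcases hB with rfl | rfl | rfl | rfl | ⟨m', hm4', hmn', rfl⟩
    · exact Or.inr (empty_subset _)
    · exact Or.inr (singleton_subset_co hn hs1 hs4 hsc)
    · exact Or.inl (Finset.Subset.refl _)
    · exact Or.inl sdiff_subset
    · exact Or.inr (E_subset_co hn ha1 ha4 hb1 hb4 hc4 hac hbc hmn')
  · rcases hB with rfl | rfl | rfl | rfl | ⟨m', hm4', hmn', rfl⟩
    · exact Or.inr (empty_subset _)
    · exact Or.inr (singleton_subset_Icc hn hs1 hs4)
    · exact Or.inr sdiff_subset
    · exact Or.inl (Finset.Subset.refl _)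
    · exact Or.inr (E_subset_Icc hn ha1 ha4 hb1 hb4 hmn')
  · rcases hB with rfl | rfl | rfl | rfl | ⟨m', hm4', hmn', rfl⟩
    · exact Or.inr (empty_subset _)
    · exact Or.inr (singleton_subset_E hs)
    · exact Or.inl (E_subset_co hn ha1 ha4 hb1 hb4 hc4 hac hbc hmn)
    · exact Or.inl (E_subset_Icc hn ha1 ha4 hb1 hb4 hmn)
    · rcases le_total m m' with h | h
      · exact Or.inl (E_mono h)
      · exact Or.inr (E_mono h)

lemma cover {n : ℕ} {A : Finset ℕ} (hA : A ∈ sixSatFamily n) :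
    A ∈ D n 1 1 2 4 ∨ A ∈ D n 2 2 3 1 ∨ A ∈ D n 3 4 3 2 ∨ A ∈ D n 4 4 2 3 ∨ A ∈ D n 1 1 3 2 := by
  simp only [sixSatFamily, mem_union, mem_insert, mem_singleton] at hA
  rcases hA with (((((hA | hA | hA | hA | hA | hA | hA | hA | hA | hA) | hA) | hA) | hA) | hA) | hA
  · exact Or.inl (by simp [D, hA])
  · exact Or.inl (by simp [D, hA])
  · exact Or.inl (by simp [D, hA])
  · exact Or.inr (Or.inl (by simp [D, hA]))
  · exact Or.inr (Or.inr (Or.inl (by simp [D, hA])))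
  · exact Or.inr (Or.inr (Or.inr (Or.inl (by simp [D, hA]))))
  · exact Or.inr (Or.inl (by simp [D, hA]))
  · exact Or.inr (Or.inr (Or.inl (by simp [D, hA])))
  · exact Or.inr (Or.inr (Or.inr (Or.inl (by simp [D, hA]))))
  · exact Or.inl (by simp [D, hA])
  · exact Or.inl (by simp [D, hA])
  · exact Or.inr (Or.inr (Or.inr (Or.inr (by simp [D, hA]))))
  · exact Or.inr (Or.inl (by simp [D, hA]))
  · exact Or.inr (Or.inr (Or.inl (by simp [D, hA])))
  · exact Or.inr (Or.inr (Or.inr (Or.inl (by simp [D, hA]))))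

lemma no_six {n : ℕ} (hn : 6 ≤ n) : ¬ ContainsAntichain 6 (sixSatFamily n) := by
  rintro ⟨S, hSF, hcard, hpair⟩
  have hle : ∀ s a b c : ℕ, (s = a ∨ s = b) → 1 ≤ a → a ≤ 4 → 1 ≤ b → b ≤ 4 → c ≤ 4 →
      a ≠ c → b ≠ c → (S ∩ D n s a b c).card ≤ 1 := by
    intro s a b c hs ha1 ha4 hb1 hb4 hc4 hac hbc
    rw [Finset.card_le_one]
    intro x hx y hy
    by_contra hxy
    rw [Finset.mem_inter] at hx hy
    rcases chainD hn hs ha1 ha4 hb1 hb4 hc4 hac hbc x hx.2 y hy.2 with h | h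
    · exact hpair x hx.1 y hy.1 hxy h
    · exact hpair y hy.1 x hx.1 (Ne.symm hxy) h
  have hsub : S ⊆ (S ∩ D n 1 1 2 4) ∪ (S ∩ D n 2 2 3 1) ∪ (S ∩ D n 3 4 3 2) ∪
      (S ∩ D n 4 4 2 3) ∪ (S ∩ D n 1 1 3 2) := by
    intro C hC
    simp only [mem_union, mem_inter]
    rcases cover (hSF hC) with h | h | h | h | h
    · exact Or.inl (Or.inl (Or.inl (Or.inl ⟨hC, h⟩)))
    · exact Or.inl (Or.inl (Or.inl (Or.inr ⟨hC, h⟩)))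
    · exact Or.inl (Or.inl (Or.inr ⟨hC, h⟩))
    · exact Or.inl (Or.inr ⟨hC, h⟩)
    · exact Or.inr ⟨hC, h⟩
  have h1 := Finset.card_le_card hsub
  have h2 := Finset.card_union_le ((S ∩ D n 1 1 2 4) ∪ (S ∩ D n 2 2 3 1) ∪ (S ∩ D n 3 4 3 2) ∪
      (S ∩ D n 4 4 2 3)) (S ∩ D n 1 1 3 2)
  have h3 := Finset.card_union_le ((S ∩ D n 1 1 2 4) ∪ (S ∩ D n 2 2 3 1) ∪ (S ∩ D n 3 4 3 2))
      (S ∩ D n 4 4 2 3)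
  have h4 := Finset.card_union_le ((S ∩ D n 1 1 2 4) ∪ (S ∩ D n 2 2 3 1)) (S ∩ D n 3 4 3 2)
  have h5 := Finset.card_union_le (S ∩ D n 1 1 2 4) (S ∩ D n 2 2 3 1)
  have k1 := hle 1 1 2 4 (by omega) (by omega) (by omega) (by omega) (by omega) (by omega) (by omega) (by omega)
  have k2 := hle 2 2 3 1 (by omega) (by omega) (by omega) (by omega) (by omega) (by omega) (by omega) (by omega)
  have k3 := hle 3 4 3 2 (by omega) (by omega) (by omega) (by omega) (by omega) (by omega) (by omega) (by omega)
  have k4 := hle 4 4 2 3 (by omega) (by omega) (by omega) (by omega) (by omega) (by omega) (by omega) (by omega)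
  have k5 := hle 1 1 3 2 (by omega) (by omega) (by omega) (by omega) (by omega) (by omega) (by omega) (by omega)
  omega


lemma empty_mem_F {n : ℕ} : (∅ : Finset ℕ) ∈ sixSatFamily n := by simp [sixSatFamily]

lemma Icc_mem_F {n : ℕ} : Finset.Icc 1 n ∈ sixSatFamily n := by simp [sixSatFamily]

lemma singleton_mem_F {n s : ℕ} (hs1 : 1 ≤ s) (hs4 : s ≤ 4) :
    ({s} : Finset ℕ) ∈ sixSatFamily n := by
  interval_cases s <;> simp [sixSatFamily]

lemma co_mem_F {n c : ℕ} (hc1 : 1 ≤ c) (hc4 : c ≤ 4) :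
    Finset.Icc 1 n \ {c} ∈ sixSatFamily n := by
  interval_cases c <;> simp [sixSatFamily]

lemma X_eq_co {n c : ℕ} {X : Finset ℕ} (hX : X ⊆ Finset.Icc 1 n)
    (hY : ∀ z, 5 ≤ z → z ≤ n → z ∈ X) (hc : c ∉ X)
    (hcc : ∀ y, 1 ≤ y → y ≤ 4 → y ≠ c → y ∈ X) : X = Finset.Icc 1 n \ {c} := by
  ext x
  simp only [Finset.mem_sdiff, Finset.mem_Icc, Finset.mem_singleton]
  constructor
  · intro hx
    have := hX hx
    simp only [Finset.mem_Icc] at this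
    exact ⟨this, fun h => hc (h ▸ hx)⟩
  · rintro ⟨⟨h1, h2⟩, h3⟩
    by_cases h4 : x ≤ 4
    · exact hcc x h1 h4 h3
    · exact hY x (by omega) h2

lemma chain_hit {n a b : ℕ} {X : Finset ℕ} (hn : 6 ≤ n) (ha1 : 1 ≤ a) (ha4 : a ≤ 4)
    (hb1 : 1 ≤ b) (hb4 : b ≤ 4) (hab : a ≠ b)
    (hsub : pairChain n a b ⊆ sixSatFamily n)
    (hX : X ⊆ Finset.Icc 1 n) (hXF : X ∉ sixSatFamily n) :
    ∃ m, 4 ≤ m ∧ m ≤ n ∧ ¬ X ⊆ E a b m ∧ ¬ E a b m ⊆ X := by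
  have hXmem : ∀ x ∈ X, 1 ≤ x ∧ x ≤ n := fun x hx => by
    have := hX hx; simpa [Finset.mem_Icc] using this
  by_cases hA1 : ∃ x ∈ X, x ≤ 4 ∧ x ≠ a ∧ x ≠ b
  · obtain ⟨x0, hx0X, hx04, hx0a, hx0b⟩ := hA1
    have hXnsub : ∀ m : ℕ, ¬ X ⊆ E a b m := by
      intro m h
      have := h hx0X; rw [mem_E_iff] at this; omega
    by_cases hA2 : a ∈ X ∧ b ∈ X
    · by_cases hY : ∃ z, 5 ≤ z ∧ z ≤ n ∧ z ∉ X
      · obtain ⟨z, hz5, hzn, hzX⟩ := hY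
        refine ⟨z, by omega, hzn, hXnsub z, fun h => hzX (h ?_)⟩
        rw [mem_E_iff]; omega
      · push_neg at hY
        exfalso
        have hx01 := (hXmem x0 hx0X).1
        have key : ∀ u v : ℕ, 1 ≤ u → u ≤ 4 → 1 ≤ v → v ≤ 4 → u ≠ v →
            u ∉ X → v ∉ X → False := by
          intro u v hu1 hu4 hv1 hv4 huv huX hvX
          have h1 : a ≠ u := fun h => huX (h ▸ hA2.1)
          have h2 : a ≠ v := fun h => hvX (h ▸ hA2.1)
          have h3 : b ≠ u := fun h => huX (h ▸ hA2.2)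
          have h4 : b ≠ v := fun h => hvX (h ▸ hA2.2)
          have h5 : x0 ≠ u := fun h => huX (h ▸ hx0X)
          have h6 : x0 ≠ v := fun h => hvX (h ▸ hx0X)
          omega
        have h0X : (0 : ℕ) ∉ X := fun h => by have := (hXmem 0 h).1; omega
        have hcl : ∃ c, c ≤ 4 ∧ c ∉ X ∧ ∀ y, 1 ≤ y → y ≤ 4 → y ≠ c → y ∈ X := by
          by_cases h1X : (1:ℕ) ∈ X <;> by_cases h2X : (2:ℕ) ∈ X <;>
            by_cases h3X : (3:ℕ) ∈ X <;> by_cases h4X : (4:ℕ) ∈ X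
          · exact ⟨0, by omega, h0X, fun y hy1 hy4 _ => by
              interval_cases y <;> assumption⟩
          · exact ⟨4, by omega, h4X, fun y hy1 hy4 hy => by
              interval_cases y <;> first | assumption | exact absurd rfl hy⟩
          · exact ⟨3, by omega, h3X, fun y hy1 hy4 hy => by
              interval_cases y <;> first | assumption | exact absurd rfl hy⟩
          · exact absurd (key 3 4 (by omega) (by omega) (by omega) (by omega) (by omega) h3X h4X) (by simp)
          · exact ⟨2, by omega, h2X, fun y hy1 hy4 hy => by
              interval_cases y <;> first | assumption | exact absurd rfl hy⟩
          · exact absurd (key 2 4 (by omega) (by omega) (by omega) (by omega) (by omega) h2X h4X) (by simp)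
          · exact absurd (key 2 3 (by omega) (by omega) (by omega) (by omega) (by omega) h2X h3X) (by simp)
          · exact absurd (key 2 3 (by omega) (by omega) (by omega) (by omega) (by omega) h2X h3X) (by simp)
          · exact ⟨1, by omega, h1X, fun y hy1 hy4 hy => by
              interval_cases y <;> first | assumption | exact absurd rfl hy⟩
          · exact absurd (key 1 4 (by omega) (by omega) (by omega) (by omega) (by omega) h1X h4X) (by simp)
          · exact absurd (key 1 3 (by omega) (by omega) (by omega) (by omega) (by omega) h1X h3X) (by simp)
          · exact absurd (key 1 3 (by omega) (by omega) (by omega) (by omega) (by omega) h1X h3X) (by simp)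
          · exact absurd (key 1 2 (by omega) (by omega) (by omega) (by omega) (by omega) h1X h2X) (by simp)
          · exact absurd (key 1 2 (by omega) (by omega) (by omega) (by omega) (by omega) h1X h2X) (by simp)
          · exact absurd (key 1 2 (by omega) (by omega) (by omega) (by omega) (by omega) h1X h2X) (by simp)
          · exact absurd (key 1 2 (by omega) (by omega) (by omega) (by omega) (by omega) h1X h2X) (by simp)
        obtain ⟨c, hc4, hcX, hcc⟩ := hcl
        have hXeq : X = Finset.Icc 1 n \ {c} := X_eq_co hX hY hcX hcc
        rcases Nat.lt_or_ge c 1 with hc | hc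
        · have hc0 : c = 0 := by omega
          subst hc0
          have h00 : Finset.Icc 1 n \ {0} = Finset.Icc 1 n := by
            ext x; simp only [Finset.mem_sdiff, Finset.mem_Icc, Finset.mem_singleton]; omega
          exact hXF (by rw [hXeq, h00]; exact Icc_mem_F)
        · exact hXF (by rw [hXeq]; exact co_mem_F hc hc4)
    · rcases not_and_or.mp hA2 with hw | hw
      · exact ⟨4, le_refl 4, by omega, hXnsub 4,
          fun h => hw (h (by rw [mem_E_iff]; tauto))⟩
      · exact ⟨4, le_refl 4, by omega, hXnsub 4,
          fun h => hw (h (by rw [mem_E_iff]; tauto))⟩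
  · push_neg at hA1
    by_cases hA2 : a ∈ X ∧ b ∈ X
    · by_contra hcon
      push_neg at hcon
      by_cases hY0 : ∃ z ∈ X, 5 ≤ z
      · obtain ⟨z, hzX, hz5⟩ := hY0
        have hne : X.Nonempty := ⟨z, hzX⟩
        set t := X.max' hne with ht
        have htX : t ∈ X := X.max'_mem hne
        have ht5 : 5 ≤ t := le_trans hz5 (X.le_max' z hzX)
        have htn : t ≤ n := (hXmem t htX).2
        have hXE : X = E a b t := by
          ext x
          rw [mem_E_iff]
          constructor
          · intro hx
            by_cases h4 : x ≤ 4
            · rcases em (x = a) with h | h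
              · exact Or.inl h
              · exact Or.inr (Or.inl (hA1 x hx h4 h))
            · exact Or.inr (Or.inr ⟨by omega, X.le_max' x hx⟩)
          · intro hx
            rcases hx with rfl | rfl | ⟨h5, hxt⟩
            · exact hA2.1
            · exact hA2.2
            · by_contra hxX
              have hnsub : ¬ X ⊆ E a b x := by
                intro h
                have := h htX; rw [mem_E_iff] at this
                have hxt' : x = t := by omega
                exact hxX (hxt' ▸ htX)
              have hE := hcon x (by omega) (by omega) hnsub
              exact hxX (hE (by rw [mem_E_iff]; omega))
        exact hXF (hsub (mem_pairChain.mpr ⟨t, by omega, htn, hXE⟩))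
      · push_neg at hY0
        have hXE : X = E a b 4 := by
          ext x
          rw [mem_E_iff]
          constructor
          · intro hx
            have h4 : x ≤ 4 := by have := hY0 x hx; omega
            rcases em (x = a) with h | h
            · exact Or.inl h
            · exact Or.inr (Or.inl (hA1 x hx h4 h))
          · intro hx
            rcases hx with rfl | rfl | ⟨h5, hx4⟩
            · exact hA2.1
            · exact hA2.2
            · omega
        exact hXF (hsub (mem_pairChain.mpr ⟨4, le_refl 4, by omega, hXE⟩))
    · have hw : a ∉ X ∨ b ∉ X := not_and_or.mp hA2
      by_cases hXab : ∃ u ∈ X, 5 ≤ u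
      · obtain ⟨u, huX, hu5⟩ := hXab
        refine ⟨4, le_refl 4, by omega, ?_, ?_⟩
        · intro h; have := h huX; rw [mem_E_iff] at this; omega
        · intro h
          rcases hw with hw | hw
          · exact hw (h (by rw [mem_E_iff]; tauto))
          · exact hw (h (by rw [mem_E_iff]; tauto))
      · push_neg at hXab
        exfalso
        by_cases haX : a ∈ X <;> by_cases hbX : b ∈ X
        · exact hA2 ⟨haX, hbX⟩
        · have hXe : X = {a} := by
            ext x
            simp only [Finset.mem_singleton]
            constructor
            · intro hx
              have h4 : x ≤ 4 := by have := hXab x hx; omega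
              rcases em (x = a) with h | h
              · exact h
              · exact absurd (hA1 x hx h4 h ▸ hx) hbX
            · rintro rfl; exact haX
          exact hXF (hXe ▸ singleton_mem_F ha1 ha4)
        · have hXe : X = {b} := by
            ext x
            simp only [Finset.mem_singleton]
            constructor
            · intro hx
              have h4 : x ≤ 4 := by have := hXab x hx; omega
              rcases em (x = a) with h | h
              · exact absurd (h ▸ hx) haX
              · exact hA1 x hx h4 h
            · rintro rfl; exact hbX
          exact hXF (hXe ▸ singleton_mem_F hb1 hb4)
        · have hXe : X = ∅ := by
            ext x
            simp only [Finset.notMem_empty, iff_false]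
            intro hx
            have h4 : x ≤ 4 := by have := hXab x hx; omega
            rcases em (x = a) with h | h
            · exact haX (h ▸ hx)
            · exact hbX (hA1 x hx h4 h ▸ hx)
          exact hXF (hXe ▸ empty_mem_F)

lemma sub12 {n : ℕ} : pairChain n 1 2 ⊆ sixSatFamily n := fun A hA =>
  mem_union_left _ (mem_union_left _ (mem_union_left _ (mem_union_left _ (mem_union_right _ hA))))
lemma sub13 {n : ℕ} : pairChain n 1 3 ⊆ sixSatFamily n := fun A hA =>
  mem_union_left _ (mem_union_left _ (mem_union_left _ (mem_union_right _ hA)))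
lemma sub23 {n : ℕ} : pairChain n 2 3 ⊆ sixSatFamily n := fun A hA =>
  mem_union_left _ (mem_union_left _ (mem_union_right _ hA))
lemma sub43 {n : ℕ} : pairChain n 4 3 ⊆ sixSatFamily n := fun A hA =>
  mem_union_left _ (mem_union_right _ hA)
lemma sub42 {n : ℕ} : pairChain n 4 2 ⊆ sixSatFamily n := fun A hA =>
  mem_union_right _ hA

set_option maxHeartbeats 1000000 in
lemma saturation {n : ℕ} {X : Finset ℕ} (hn : 6 ≤ n) (hXsub : X ⊆ Finset.Icc 1 n)
    (hXF : X ∉ sixSatFamily n) : ContainsAntichain 6 (insert X (sixSatFamily n)) := by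
  obtain ⟨m1, hm1, hm1n, h1l, h1r⟩ :=
    chain_hit hn (by omega) (by omega) (by omega) (by omega) (by omega) sub12 hXsub hXF
  obtain ⟨m2, hm2, hm2n, h2l, h2r⟩ :=
    chain_hit hn (by omega) (by omega) (by omega) (by omega) (by omega) sub13 hXsub hXF
  obtain ⟨m3, hm3, hm3n, h3l, h3r⟩ :=
    chain_hit hn (by omega) (by omega) (by omega) (by omega) (by omega) sub23 hXsub hXF
  obtain ⟨m4, hm4, hm4n, h4l, h4r⟩ :=
    chain_hit hn (by omega) (by omega) (by omega) (by omega) (by omega) sub43 hXsub hXF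
  obtain ⟨m5, hm5, hm5n, h5l, h5r⟩ :=
    chain_hit hn (by omega) (by omega) (by omega) (by omega) (by omega) sub42 hXsub hXF
  set e1 := E 1 2 m1 with he1
  set e2 := E 1 3 m2 with he2
  set e3 := E 2 3 m3 with he3
  set e4 := E 4 3 m4 with he4
  set e5 := E 4 2 m5 with he5
  have q12 : ¬ e1 ⊆ e2 := E_not_subset (by omega) (by omega) (Or.inr ⟨by omega, by omega, by omega⟩)
  have q13 : ¬ e1 ⊆ e3 := E_not_subset (by omega) (by omega) (Or.inl ⟨by omega, by omega, by omega⟩)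
  have q14 : ¬ e1 ⊆ e4 := E_not_subset (by omega) (by omega) (Or.inl ⟨by omega, by omega, by omega⟩)
  have q15 : ¬ e1 ⊆ e5 := E_not_subset (by omega) (by omega) (Or.inl ⟨by omega, by omega, by omega⟩)
  have q21 : ¬ e2 ⊆ e1 := E_not_subset (by omega) (by omega) (Or.inr ⟨by omega, by omega, by omega⟩)
  have q23 : ¬ e2 ⊆ e3 := E_not_subset (by omega) (by omega) (Or.inl ⟨by omega, by omega, by omega⟩)
  have q24 : ¬ e2 ⊆ e4 := E_not_subset (by omega) (by omega) (Or.inl ⟨by omega, by omega, by omega⟩)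
  have q25 : ¬ e2 ⊆ e5 := E_not_subset (by omega) (by omega) (Or.inl ⟨by omega, by omega, by omega⟩)
  have q31 : ¬ e3 ⊆ e1 := E_not_subset (by omega) (by omega) (Or.inr ⟨by omega, by omega, by omega⟩)
  have q32 : ¬ e3 ⊆ e2 := E_not_subset (by omega) (by omega) (Or.inl ⟨by omega, by omega, by omega⟩)
  have q34 : ¬ e3 ⊆ e4 := E_not_subset (by omega) (by omega) (Or.inl ⟨by omega, by omega, by omega⟩)
  have q35 : ¬ e3 ⊆ e5 := E_not_subset (by omega) (by omega) (Or.inr ⟨by omega, by omega, by omega⟩)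
  have q41 : ¬ e4 ⊆ e1 := E_not_subset (by omega) (by omega) (Or.inl ⟨by omega, by omega, by omega⟩)
  have q42 : ¬ e4 ⊆ e2 := E_not_subset (by omega) (by omega) (Or.inl ⟨by omega, by omega, by omega⟩)
  have q43 : ¬ e4 ⊆ e3 := E_not_subset (by omega) (by omega) (Or.inl ⟨by omega, by omega, by omega⟩)
  have q45 : ¬ e4 ⊆ e5 := E_not_subset (by omega) (by omega) (Or.inr ⟨by omega, by omega, by omega⟩)
  have q51 : ¬ e5 ⊆ e1 := E_not_subset (by omega) (by omega) (Or.inl ⟨by omega, by omega, by omega⟩)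
  have q52 : ¬ e5 ⊆ e2 := E_not_subset (by omega) (by omega) (Or.inl ⟨by omega, by omega, by omega⟩)
  have q53 : ¬ e5 ⊆ e3 := E_not_subset (by omega) (by omega) (Or.inl ⟨by omega, by omega, by omega⟩)
  have q54 : ¬ e5 ⊆ e4 := E_not_subset (by omega) (by omega) (Or.inr ⟨by omega, by omega, by omega⟩)
  have he1F : e1 ∈ sixSatFamily n := sub12 (mem_pairChain.mpr ⟨m1, hm1, hm1n, rfl⟩)
  have he2F : e2 ∈ sixSatFamily n := sub13 (mem_pairChain.mpr ⟨m2, hm2, hm2n, rfl⟩)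
  have he3F : e3 ∈ sixSatFamily n := sub23 (mem_pairChain.mpr ⟨m3, hm3, hm3n, rfl⟩)
  have he4F : e4 ∈ sixSatFamily n := sub43 (mem_pairChain.mpr ⟨m4, hm4, hm4n, rfl⟩)
  have he5F : e5 ∈ sixSatFamily n := sub42 (mem_pairChain.mpr ⟨m5, hm5, hm5n, rfl⟩)
  refine ⟨{X, e1, e2, e3, e4, e5}, ?_, ?_, ?_⟩
  · intro A hA
    simp only [mem_insert, mem_singleton] at hA
    rcases hA with rfl | rfl | rfl | rfl | rfl | rfl
    · exact mem_insert_self _ _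
    · exact mem_insert_of_mem he1F
    · exact mem_insert_of_mem he2F
    · exact mem_insert_of_mem he3F
    · exact mem_insert_of_mem he4F
    · exact mem_insert_of_mem he5F
  · have n1 : X ∉ ({e1, e2, e3, e4, e5} : Finset (Finset ℕ)) := by
      simp only [mem_insert, mem_singleton]
      push_neg
      exact ⟨ne_of_not_subset h1l, ne_of_not_subset h2l, ne_of_not_subset h3l,
        ne_of_not_subset h4l, ne_of_not_subset h5l⟩
    have n2 : e1 ∉ ({e2, e3, e4, e5} : Finset (Finset ℕ)) := by
      simp only [mem_insert, mem_singleton]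
      push_neg
      exact ⟨ne_of_not_subset q12, ne_of_not_subset q13, ne_of_not_subset q14,
        ne_of_not_subset q15⟩
    have n3 : e2 ∉ ({e3, e4, e5} : Finset (Finset ℕ)) := by
      simp only [mem_insert, mem_singleton]
      push_neg
      exact ⟨ne_of_not_subset q23, ne_of_not_subset q24, ne_of_not_subset q25⟩
    have n4 : e3 ∉ ({e4, e5} : Finset (Finset ℕ)) := by
      simp only [mem_insert, mem_singleton]
      push_neg
      exact ⟨ne_of_not_subset q34, ne_of_not_subset q35⟩
    have n5 : e4 ∉ ({e5} : Finset (Finset ℕ)) := by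
      simp only [mem_singleton]
      exact ne_of_not_subset q45
    rw [card_insert_of_notMem n1, card_insert_of_notMem n2, card_insert_of_notMem n3,
      card_insert_of_notMem n4, card_insert_of_notMem n5, card_singleton]
  · intro A hA B hB hne
    simp only [mem_insert, mem_singleton] at hA hB
    rcases hA with rfl | rfl | rfl | rfl | rfl | rfl <;>
      rcases hB with rfl | rfl | rfl | rfl | rfl | rfl <;>
      first | assumption | exact absurd rfl hne

def gfun (A : Finset ℕ) : ℕ :=
  (if 1 ∈ A then 1 else 0) + (if 2 ∈ A then 2 else 0) + (if 3 ∈ A then 4 else 0) +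
  (if 4 ∈ A then 8 else 0) + (if 5 ∈ A then 16 else 0)

lemma card_base {n : ℕ} (hn : 6 ≤ n) :
    ({∅, Finset.Icc 1 n, {1}, {2}, {3}, {4},
      Finset.Icc 1 n \ {1}, Finset.Icc 1 n \ {2},
      Finset.Icc 1 n \ {3}, Finset.Icc 1 n \ {4}} : Finset (Finset ℕ)).card = 10 := by
  have h1 : (1:ℕ) ≤ n := by omega
  have h2 : (2:ℕ) ≤ n := by omega
  have h3 : (3:ℕ) ≤ n := by omega
  have h4 : (4:ℕ) ≤ n := by omega
  have h5 : (5:ℕ) ≤ n := by omega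
  have e0 : gfun ∅ = 0 := by simp [gfun]
  have eN : gfun (Finset.Icc 1 n) = 31 := by
    simp [gfun, Finset.mem_Icc, h1, h2, h3, h4, h5]
  have es1 : gfun {1} = 1 := by simp [gfun]
  have es2 : gfun {2} = 2 := by simp [gfun]
  have es3 : gfun {3} = 4 := by simp [gfun]
  have es4 : gfun {4} = 8 := by simp [gfun]
  have ec1 : gfun (Finset.Icc 1 n \ {1}) = 30 := by
    simp [gfun, Finset.mem_sdiff, Finset.mem_Icc, h1, h2, h3, h4, h5]
  have ec2 : gfun (Finset.Icc 1 n \ {2}) = 29 := by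
    simp [gfun, Finset.mem_sdiff, Finset.mem_Icc, h1, h2, h3, h4, h5]
  have ec3 : gfun (Finset.Icc 1 n \ {3}) = 27 := by
    simp [gfun, Finset.mem_sdiff, Finset.mem_Icc, h1, h2, h3, h4, h5]
  have ec4 : gfun (Finset.Icc 1 n \ {4}) = 23 := by
    simp [gfun, Finset.mem_sdiff, Finset.mem_Icc, h1, h2, h3, h4, h5]
  have himg : Finset.image gfun
      ({∅, Finset.Icc 1 n, {1}, {2}, {3}, {4},
        Finset.Icc 1 n \ {1}, Finset.Icc 1 n \ {2},
        Finset.Icc 1 n \ {3}, Finset.Icc 1 n \ {4}} : Finset (Finset ℕ)) =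
      ({0, 31, 1, 2, 4, 8, 30, 29, 27, 23} : Finset ℕ) := by
    simp only [Finset.image_insert, Finset.image_singleton, e0, eN, es1, es2, es3, es4,
      ec1, ec2, ec3, ec4]
  have hle := Finset.card_image_le (s :=
      ({∅, Finset.Icc 1 n, {1}, {2}, {3}, {4},
        Finset.Icc 1 n \ {1}, Finset.Icc 1 n \ {2},
        Finset.Icc 1 n \ {3}, Finset.Icc 1 n \ {4}} : Finset (Finset ℕ))) (f := gfun)
  rw [himg] at hle
  have h10 : (({0, 31, 1, 2, 4, 8, 30, 29, 27, 23} : Finset ℕ)).card = 10 := by decide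
  rw [h10] at hle
  have c1 := Finset.card_insert_le (∅ : Finset ℕ)
    ({Finset.Icc 1 n, {1}, {2}, {3}, {4}, Finset.Icc 1 n \ {1}, Finset.Icc 1 n \ {2},
      Finset.Icc 1 n \ {3}, Finset.Icc 1 n \ {4}} : Finset (Finset ℕ))
  have c2 := Finset.card_insert_le (Finset.Icc 1 n)
    ({{1}, {2}, {3}, {4}, Finset.Icc 1 n \ {1}, Finset.Icc 1 n \ {2},
      Finset.Icc 1 n \ {3}, Finset.Icc 1 n \ {4}} : Finset (Finset ℕ))
  have c3 := Finset.card_insert_le ({1} : Finset ℕ)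
    ({{2}, {3}, {4}, Finset.Icc 1 n \ {1}, Finset.Icc 1 n \ {2},
      Finset.Icc 1 n \ {3}, Finset.Icc 1 n \ {4}} : Finset (Finset ℕ))
  have c4 := Finset.card_insert_le ({2} : Finset ℕ)
    ({{3}, {4}, Finset.Icc 1 n \ {1}, Finset.Icc 1 n \ {2},
      Finset.Icc 1 n \ {3}, Finset.Icc 1 n \ {4}} : Finset (Finset ℕ))
  have c5 := Finset.card_insert_le ({3} : Finset ℕ)
    ({{4}, Finset.Icc 1 n \ {1}, Finset.Icc 1 n \ {2},
      Finset.Icc 1 n \ {3}, Finset.Icc 1 n \ {4}} : Finset (Finset ℕ))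
  have c6 := Finset.card_insert_le ({4} : Finset ℕ)
    ({Finset.Icc 1 n \ {1}, Finset.Icc 1 n \ {2},
      Finset.Icc 1 n \ {3}, Finset.Icc 1 n \ {4}} : Finset (Finset ℕ))
  have c7 := Finset.card_insert_le (Finset.Icc 1 n \ {1})
    ({Finset.Icc 1 n \ {2}, Finset.Icc 1 n \ {3}, Finset.Icc 1 n \ {4}} : Finset (Finset ℕ))
  have c8 := Finset.card_insert_le (Finset.Icc 1 n \ {2})
    ({Finset.Icc 1 n \ {3}, Finset.Icc 1 n \ {4}} : Finset (Finset ℕ))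
  have c9 := Finset.card_insert_le (Finset.Icc 1 n \ {3})
    ({Finset.Icc 1 n \ {4}} : Finset (Finset ℕ))
  have c10 : (({Finset.Icc 1 n \ {4}}) : Finset (Finset ℕ)).card = 1 := Finset.card_singleton _
  omega

lemma disj_pc {n a b c d : ℕ} (ha : a ≤ 4) (hb : b ≤ 4) (hc : c ≤ 4) (hd : d ≤ 4)
    (hab : a ≠ b) (hcd : c ≠ d) (hne : ¬(a = c ∨ a = d) ∨ ¬(b = c ∨ b = d)) :
    Disjoint (pairChain n a b) (pairChain n c d) := by
  rw [Finset.disjoint_left]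
  rintro A hA hA'
  rw [mem_pairChain] at hA hA'
  obtain ⟨m, hm4, hmn, rfl⟩ := hA
  obtain ⟨m', hm4', hmn', hEq⟩ := hA'
  have c1 := card_E ha hb hab hm4
  have c2 := card_E hc hd hcd hm4'
  rw [hEq] at c1
  have hmm : m = m' := by omega
  subst hmm
  have h1 : a ∈ E c d m := hEq ▸ (show a ∈ E a b m by rw [mem_E_iff]; tauto)
  have h2 : b ∈ E c d m := hEq ▸ (show b ∈ E a b m by rw [mem_E_iff]; tauto)
  rw [mem_E_iff] at h1 h2
  omega

lemma disj_base_pc {n a b : ℕ} (hn : 6 ≤ n) (ha : a ≤ 4) (hb : b ≤ 4) (hab : a ≠ b) :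
    Disjoint ({∅, Finset.Icc 1 n, {1}, {2}, {3}, {4},
      Finset.Icc 1 n \ {1}, Finset.Icc 1 n \ {2},
      Finset.Icc 1 n \ {3}, Finset.Icc 1 n \ {4}} : Finset (Finset ℕ)) (pairChain n a b) := by
  rw [Finset.disjoint_left]
  intro A hA hA'
  rw [mem_pairChain] at hA'
  obtain ⟨m, hm4, hmn, rfl⟩ := hA'
  have cE := card_E ha hb hab hm4
  simp only [mem_insert, mem_singleton] at hA
  rcases hA with h | h | h | h | h | h | h | h | h | h
  · rw [h] at cE; simp at cE; omega
  · rw [h, Nat.card_Icc] at cE; omega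
  · rw [h] at cE; simp at cE; omega
  · rw [h] at cE; simp at cE; omega
  · rw [h] at cE; simp at cE; omega
  · rw [h] at cE; simp at cE; omega
  · rw [h, Finset.card_sdiff_of_subset (by simp [Finset.mem_Icc]; omega), Nat.card_Icc,
      Finset.card_singleton] at cE; omega
  · rw [h, Finset.card_sdiff_of_subset (by simp [Finset.mem_Icc]; omega), Nat.card_Icc,
      Finset.card_singleton] at cE; omega
  · rw [h, Finset.card_sdiff_of_subset (by simp [Finset.mem_Icc]; omega), Nat.card_Icc,
      Finset.card_singleton] at cE; omega
  · rw [h, Finset.card_sdiff_of_subset (by simp [Finset.mem_Icc]; omega), Nat.card_Icc,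
      Finset.card_singleton] at cE; omega

lemma card_F {n : ℕ} (hn : 6 ≤ n) : (sixSatFamily n).card = 5 * n - 5 := by
  have d12 := disj_base_pc (a := 1) (b := 2) (n := n) hn (by omega) (by omega) (by omega)
  have d13 := disj_base_pc (a := 1) (b := 3) (n := n) hn (by omega) (by omega) (by omega)
  have d23 := disj_base_pc (a := 2) (b := 3) (n := n) hn (by omega) (by omega) (by omega)
  have d43 := disj_base_pc (a := 4) (b := 3) (n := n) hn (by omega) (by omega) (by omega)
  have d42 := disj_base_pc (a := 4) (b := 2) (n := n) hn (by omega) (by omega) (by omega)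
  have p12_13 := disj_pc (n := n) (a := 1) (b := 2) (c := 1) (d := 3)
    (by omega) (by omega) (by omega) (by omega) (by omega) (by omega) (by omega)
  have p12_23 := disj_pc (n := n) (a := 1) (b := 2) (c := 2) (d := 3)
    (by omega) (by omega) (by omega) (by omega) (by omega) (by omega) (by omega)
  have p12_43 := disj_pc (n := n) (a := 1) (b := 2) (c := 4) (d := 3)
    (by omega) (by omega) (by omega) (by omega) (by omega) (by omega) (by omega)
  have p12_42 := disj_pc (n := n) (a := 1) (b := 2) (c := 4) (d := 2)
    (by omega) (by omega) (by omega) (by omega) (by omega) (by omega) (by omega)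
  have p13_23 := disj_pc (n := n) (a := 1) (b := 3) (c := 2) (d := 3)
    (by omega) (by omega) (by omega) (by omega) (by omega) (by omega) (by omega)
  have p13_43 := disj_pc (n := n) (a := 1) (b := 3) (c := 4) (d := 3)
    (by omega) (by omega) (by omega) (by omega) (by omega) (by omega) (by omega)
  have p13_42 := disj_pc (n := n) (a := 1) (b := 3) (c := 4) (d := 2)
    (by omega) (by omega) (by omega) (by omega) (by omega) (by omega) (by omega)
  have p23_43 := disj_pc (n := n) (a := 2) (b := 3) (c := 4) (d := 3)
    (by omega) (by omega) (by omega) (by omega) (by omega) (by omega) (by omega)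
  have p23_42 := disj_pc (n := n) (a := 2) (b := 3) (c := 4) (d := 2)
    (by omega) (by omega) (by omega) (by omega) (by omega) (by omega) (by omega)
  have p43_42 := disj_pc (n := n) (a := 4) (b := 3) (c := 4) (d := 2)
    (by omega) (by omega) (by omega) (by omega) (by omega) (by omega) (by omega)
  rw [sixSatFamily]
  rw [Finset.card_union_of_disjoint (by
    refine Finset.disjoint_union_left.mpr ⟨?_, ?_⟩
    · refine Finset.disjoint_union_left.mpr ⟨?_, ?_⟩
      · refine Finset.disjoint_union_left.mpr ⟨?_, ?_⟩
        · exact Finset.disjoint_union_left.mpr ⟨d42, p12_42⟩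
        · exact p13_42
      · exact p23_42
    · exact Disjoint.symm p43_42.symm)]
  rw [Finset.card_union_of_disjoint (by
    refine Finset.disjoint_union_left.mpr ⟨?_, ?_⟩
    · refine Finset.disjoint_union_left.mpr ⟨?_, ?_⟩
      · exact Finset.disjoint_union_left.mpr ⟨d43, p12_43⟩
      · exact p13_43
    · exact p23_43)]
  rw [Finset.card_union_of_disjoint (by
    refine Finset.disjoint_union_left.mpr ⟨?_, ?_⟩
    · exact Finset.disjoint_union_left.mpr ⟨d23, p12_23⟩
    · exact p13_23)]
  rw [Finset.card_union_of_disjoint (Finset.disjoint_union_left.mpr ⟨d13, p12_13⟩)]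
  rw [Finset.card_union_of_disjoint d12]
  rw [card_base hn]
  rw [card_pairChain (by omega) (by omega) (by omega)]
  rw [card_pairChain (by omega) (by omega) (by omega)]
  rw [card_pairChain (by omega) (by omega) (by omega)]
  rw [card_pairChain (by omega) (by omega) (by omega)]
  rw [card_pairChain (by omega) (by omega) (by omega)]
  omega

lemma F_subsets {n : ℕ} (hn : 6 ≤ n) : ∀ A ∈ sixSatFamily n, A ⊆ Finset.Icc 1 n := by
  intro A hA
  simp only [sixSatFamily, mem_union, mem_insert, mem_singleton] at hA
  rcases hA with (((((h | h | h | h | h | h | h | h | h | h) | h) | h) | h) | h) | h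
  · subst h; exact empty_subset _
  · subst h; exact Finset.Subset.refl _
  · subst h; exact singleton_subset_Icc hn (by omega) (by omega)
  · subst h; exact singleton_subset_Icc hn (by omega) (by omega)
  · subst h; exact singleton_subset_Icc hn (by omega) (by omega)
  · subst h; exact singleton_subset_Icc hn (by omega) (by omega)
  · subst h; exact sdiff_subset
  · subst h; exact sdiff_subset
  · subst h; exact sdiff_subset
  · subst h; exact sdiff_subset
  · rw [mem_pairChain] at h; obtain ⟨m, h4, hn', rfl⟩ := h
    exact E_subset_Icc hn (by omega) (by omega) (by omega) (by omega) hn'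
  · rw [mem_pairChain] at h; obtain ⟨m, h4, hn', rfl⟩ := h
    exact E_subset_Icc hn (by omega) (by omega) (by omega) (by omega) hn'
  · rw [mem_pairChain] at h; obtain ⟨m, h4, hn', rfl⟩ := h
    exact E_subset_Icc hn (by omega) (by omega) (by omega) (by omega) hn'
  · rw [mem_pairChain] at h; obtain ⟨m, h4, hn', rfl⟩ := h
    exact E_subset_Icc hn (by omega) (by omega) (by omega) (by omega) hn'
  · rw [mem_pairChain] at h; obtain ⟨m, h4, hn', rfl⟩ := h
    exact E_subset_Icc hn (by omega) (by omega) (by omega) (by omega) hn'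

end SixSat

/-- For `n ≥ 6`, the family `sixSatFamily n` is 6-antichain saturated and has size
`5n - 5`. -/
theorem sixSatFamily_saturated (n : ℕ) (hn : 6 ≤ n) :
    IsAntichainSaturated n 6 (sixSatFamily n) ∧ (sixSatFamily n).card = 5 * n - 5 := by
  refine ⟨⟨SixSat.F_subsets hn, SixSat.no_six hn,
    fun X hXsub hXF => SixSat.saturation hn hXsub hXF⟩, SixSat.card_F hn⟩
end
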